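/- arXiv:2406.16774 — 9 statements merged into one kernel-verified Lean document; each statement's English description precedes it below -/
import Mathlib

section
/- Let E be a field of characteristic 0 with a normalized discrete valuation v (v surjective onto ℤ on E^×), valuation ring O and uniformizer ϖ, and suppose e := v(2) ≥ 1. Let i be an integer with 1 ≤ i ≤ e, let u ∈ O^× be a unit, and set θ := 1 + ϖ^{2i−1}·u. Let K/E be a field extension containing an element s with s² = θ, and define π := (1 − s)/ϖ^{i−1} ∈ K, t := 2/ϖ^{i−1}, and π₀ := −ϖ·u. Then: t ∈ O with v(t) = e + 1 − i ≥ 1; π₀ is a uniformizer of O; π satisfies π² − t·π + π₀ = 0; and X² − t·X + π₀ is an Eisenstein polynomial over O (its non-leading coefficients lie in the maximal ideal and its constant term is not in the square of the maximal ideal). -/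
/-!
Since `s² = 1 + ϖ^(2i−1) u`, we get `(1 − s)² − 2(1 − s) = s² − 1 = ϖ^(2i−1) u`; dividing by
`ϖ^(2(i−1))` gives `π² − tπ = ϖu = −π₀`. The valuations follow from multiplicativity alone:
`v t = v 2 − (i − 1) = e + 1 − i` and `v π₀ = v ϖ + v u = 1`.
-/

section Valuation

variable {E : Type*} [Field E] {v : E → ℤ}

theorem val_one_of_mul (hv_mul : ∀ a b : E, a ≠ 0 → b ≠ 0 → v (a * b) = v a + v b) :
    v 1 = 0 := by
  have h := hv_mul 1 1 one_ne_zero one_ne_zero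
  rw [one_mul] at h
  omega

theorem val_neg_of_mul (hv_mul : ∀ a b : E, a ≠ 0 → b ≠ 0 → v (a * b) = v a + v b)
    {a : E} (ha : a ≠ 0) : v (-a) = v a := by
  have h1 : v (-1 : E) = 0 := by
    have h := hv_mul (-1) (-1) (neg_ne_zero.mpr one_ne_zero) (neg_ne_zero.mpr one_ne_zero)
    rw [neg_one_mul, neg_neg, val_one_of_mul hv_mul] at h
    omega
  rw [← neg_one_mul, hv_mul _ _ (neg_ne_zero.mpr one_ne_zero) ha, h1, zero_add]

theorem val_pow_of_mul (hv_mul : ∀ a b : E, a ≠ 0 → b ≠ 0 → v (a * b) = v a + v b)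
    {a : E} (ha : a ≠ 0) (n : ℕ) : v (a ^ n) = n * v a := by
  induction n with
  | zero => simp [val_one_of_mul hv_mul]
  | succ n ih =>
    rw [pow_succ, hv_mul _ _ (pow_ne_zero _ ha) ha, ih]
    push_cast
    ring

theorem val_div_of_mul (hv_mul : ∀ a b : E, a ≠ 0 → b ≠ 0 → v (a * b) = v a + v b)
    {a b : E} (ha : a ≠ 0) (hb : b ≠ 0) : v (a / b) = v a - v b := by
  have h := hv_mul (a / b) b (div_ne_zero ha hb) hb
  rw [div_mul_cancel₀ a hb] at h
  omega

end Valuation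

theorem eisenstein_eq_of_sq_eq_one_add {K : Type*} [Field K] {w u s : K} {j : ℕ} (hw : w ≠ 0)
    (hs : s ^ 2 = 1 + w ^ (2 * j + 1) * u) :
    ((1 - s) / w ^ j) ^ 2 - 2 / w ^ j * ((1 - s) / w ^ j) + -(w * u) = 0 := by
  field_simp
  linear_combination hs

theorem stmt_0_general (E K : Type*) [Field E] [CharZero E] [Field K] [Algebra E K]
    (v : E → ℤ)
    (hv_mul : ∀ a b : E, a ≠ 0 → b ≠ 0 → v (a * b) = v a + v b)
    (ϖ : E) (hϖ_ne : ϖ ≠ 0) (hϖ : v ϖ = 1)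
    (e : ℤ) (he : v 2 = e)
    (i : ℕ) (hi1 : 1 ≤ i) (hie : (i : ℤ) ≤ e)
    (u : E) (hu_ne : u ≠ 0) (hu : v u = 0)
    (θ : E) (hθ : θ = 1 + ϖ ^ (2 * i - 1) * u)
    (s : K) (hs : s ^ 2 = algebraMap E K θ)
    (π : K) (hπ : π = (1 - s) / (algebraMap E K ϖ) ^ (i - 1))
    (t : E) (ht : t = 2 / ϖ ^ (i - 1))
    (π₀ : E) (hπ₀ : π₀ = -(ϖ * u)) :
    (t ≠ 0 ∧ 0 ≤ v t ∧ v t = e + 1 - (i : ℤ) ∧ 1 ≤ v t) ∧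
    (π₀ ≠ 0 ∧ v π₀ = 1) ∧
    (π ^ 2 - algebraMap E K t * π + algebraMap E K π₀ = 0) ∧
    (1 ≤ v (-t) ∧ 1 ≤ v π₀ ∧ v π₀ < 2) := by
  obtain ⟨j, rfl⟩ : ∃ j, i = j + 1 := ⟨i - 1, by omega⟩
  rw [Nat.add_sub_cancel] at hπ ht
  rw [show 2 * (j + 1) - 1 = 2 * j + 1 by omega] at hθ
  have ht_ne : t ≠ 0 := ht ▸ div_ne_zero two_ne_zero (pow_ne_zero _ hϖ_ne)
  have hvt : v t = e - j := by
    rw [ht, val_div_of_mul hv_mul two_ne_zero (pow_ne_zero _ hϖ_ne),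
      val_pow_of_mul hv_mul hϖ_ne, he, hϖ, mul_one]
  have hπ₀_ne : π₀ ≠ 0 := hπ₀ ▸ neg_ne_zero.mpr (mul_ne_zero hϖ_ne hu_ne)
  have hvπ₀ : v π₀ = 1 := by
    rw [hπ₀, val_neg_of_mul hv_mul (mul_ne_zero hϖ_ne hu_ne), hv_mul _ _ hϖ_ne hu_ne, hϖ, hu,
      add_zero]
  have hvt_neg : v (-t) = v t := val_neg_of_mul hv_mul ht_ne
  have hrel : π ^ 2 - algebraMap E K t * π + algebraMap E K π₀ = 0 := by
    rw [hθ, map_add, map_one, map_mul, map_pow] at hs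
    rw [hπ, ht, hπ₀, map_div₀, map_ofNat, map_pow, map_neg, map_mul]
    exact eisenstein_eq_of_sq_eq_one_add
      ((map_ne_zero (algebraMap E K)).mpr hϖ_ne) hs
  push_cast at hvt ⊢
  exact ⟨⟨ht_ne, by omega, by omega, by omega⟩, ⟨hπ₀_ne, hvπ₀⟩, hrel, by omega, by omega, by omega⟩

/-- Let `E` be a field of characteristic `0` with a normalized discrete
valuation `v` (multiplicative on nonzero elements, ultrametric, and taking the value `1` at the
uniformizer `ϖ`, hence surjective onto `ℤ`), with valuation ring `O = {a : v a ≥ 0}`, and suppose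
`e := v 2 ≥ 1`.  Let `1 ≤ i ≤ e`, let `u` be a unit of `O` (i.e. `v u = 0`), and set
`θ := 1 + ϖ^(2i−1)·u`.  Let `K/E` be a field extension containing `s` with `s² = θ`, and put
`π := (1 − s)/ϖ^(i−1)`, `t := 2/ϖ^(i−1)`, `π₀ := −ϖ·u`.  Then `t ∈ O` with
`v t = e + 1 − i ≥ 1`; `π₀` is a uniformizer of `O` (i.e. `v π₀ = 1`); `π` satisfies the
Eisenstein equation `π² − t·π + π₀ = 0`; and `X² − t·X + π₀` is Eisenstein over `O`
(its non-leading coefficients `−t` and `π₀` have valuation `≥ 1`, and its constant term `π₀`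
has valuation `< 2`, i.e. it does not lie in the square of the maximal ideal). -/
theorem stmt_0 (E K : Type*) [Field E] [CharZero E] [Field K] [Algebra E K]
    (v : E → ℤ)
    (hv_mul : ∀ a b : E, a ≠ 0 → b ≠ 0 → v (a * b) = v a + v b)
    (hv_add : ∀ a b : E, a ≠ 0 → b ≠ 0 → a + b ≠ 0 → min (v a) (v b) ≤ v (a + b))
    (ϖ : E) (hϖ_ne : ϖ ≠ 0) (hϖ : v ϖ = 1)
    (e : ℤ) (he : v 2 = e) (he1 : 1 ≤ e)
    (i : ℕ) (hi1 : 1 ≤ i) (hie : (i : ℤ) ≤ e)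
    (u : E) (hu_ne : u ≠ 0) (hu : v u = 0)
    (θ : E) (hθ : θ = 1 + ϖ ^ (2 * i - 1) * u)
    (s : K) (hs : s ^ 2 = algebraMap E K θ)
    (π : K) (hπ : π = (1 - s) / (algebraMap E K ϖ) ^ (i - 1))
    (t : E) (ht : t = 2 / ϖ ^ (i - 1))
    (π₀ : E) (hπ₀ : π₀ = -(ϖ * u)) :
    (t ≠ 0 ∧ 0 ≤ v t ∧ v t = e + 1 - (i : ℤ) ∧ 1 ≤ v t) ∧
    (π₀ ≠ 0 ∧ v π₀ = 1) ∧
    (π ^ 2 - algebraMap E K t * π + algebraMap E K π₀ = 0) ∧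
    (1 ≤ v (-t) ∧ 1 ≤ v π₀ ∧ v π₀ < 2) :=
  stmt_0_general E K v hv_mul ϖ hϖ_ne hϖ e he i hi1 hie u hu_ne hu θ hθ s hs π hπ t ht π₀ hπ₀
end

section
/- Let F₀ be a field of characteristic 0 with normalized discrete valuation v, valuation ring O₀, uniformizer π₀, and residue field of characteristic 2 (so v(2) ≥ 1). Let t ∈ O₀ with π₀ ∣ t and t ∣ 2, let F := F₀[X]/(X² − t·X + π₀) (a field, since X² − tX + π₀ is Eisenstein over O₀), let π be the class of X, let σ be the nontrivial F₀-automorphism of F (so σ(π) = t − π), and let N_{F/F₀}(λ) := λ·σ(λ) ∈ F₀ be the norm. Then for every λ ∈ F with λ + σ(λ) = 1 one has v(N_{F/F₀}(λ)) ≤ 1 − 2·v(t); moreover λ₀ := (t − π)/t satisfies λ₀ + σ(λ₀) = 1 and v(N_{F/F₀}(λ₀)) = 1 − 2·v(t). -/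
open Polynomial

/-!
Write `λ = a + bπ`, so that `λ + σ λ = 2a + bt`; when this is `1`, the norm `a² + abt + b²π₀`
equals `a(1 - a) + b²π₀`. The summand `b²π₀` has odd valuation, while `a(1 - a)` has the even
valuation `2 v a` if `v a < 0` and is integral otherwise. If `v (bt) > 0` then `2a = 1 - bt` is a
unit, so `v (a(1 - a)) = -2 v 2 ≤ -2 v t`; if `v (bt) ≤ 0` then `v (b²π₀) ≤ 1 - 2 v t < 0`. In
both cases the two summands have distinct valuations, so the norm has the smaller one. The bound
is attained at `λ₀ = σ π / t`, of norm `π₀ / t²`.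
-/

section Valuation

variable {K : Type*} [Field K] {v : K → ℤ}
  (hv_mul : ∀ a b : K, a ≠ 0 → b ≠ 0 → v (a * b) = v a + v b)
  (hv_add : ∀ a b : K, a ≠ 0 → b ≠ 0 → a + b ≠ 0 → min (v a) (v b) ≤ v (a + b))

include hv_mul

lemma v_one : v 1 = 0 := by
  have := hv_mul 1 1 one_ne_zero one_ne_zero
  rw [mul_one] at this
  omega

lemma v_neg {x : K} (hx : x ≠ 0) : v (-x) = v x := by
  have h := hv_mul (-1) (-1) (by norm_num) (by norm_num)
  rw [neg_mul_neg, mul_one, v_one hv_mul] at h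
  rw [← neg_one_mul, hv_mul _ _ (by norm_num) hx]
  omega

lemma v_pow {x : K} (hx : x ≠ 0) (n : ℕ) : v (x ^ n) = n * v x := by
  induction n with
  | zero => simp [v_one hv_mul]
  | succ n ih => rw [pow_succ, hv_mul _ _ (pow_ne_zero n hx) hx, ih]; push_cast; ring

lemma v_div {x y : K} (hx : x ≠ 0) (hy : y ≠ 0) : v (x / y) = v x - v y := by
  have := hv_mul (x / y) y (div_ne_zero hx hy) hy
  rw [div_mul_cancel₀ x hy] at this
  omega

lemma add_ne_zero_of_v_ne {x y : K} (hx : x ≠ 0) (hxy : v x ≠ v y) : x + y ≠ 0 := by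
  intro h
  rw [eq_neg_of_add_eq_zero_right h, v_neg hv_mul hx] at hxy
  exact hxy rfl

include hv_add

lemma v_add_of_v_ne {x y : K} (hx : x ≠ 0) (hy : y ≠ 0) (hxy : v x ≠ v y) :
    v (x + y) = min (v x) (v y) := by
  have hs := add_ne_zero_of_v_ne hv_mul hx hxy
  have h := hv_add x y hx hy hs
  rcases lt_or_gt_of_ne hxy with hlt | hlt
  · have h' := hv_add (x + y) (-y) hs (neg_ne_zero.2 hy) (by rwa [add_neg_cancel_right])
    rw [add_neg_cancel_right, v_neg hv_mul hy] at h'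
    omega
  · have h' := hv_add (x + y) (-x) hs (neg_ne_zero.2 hx) (by rwa [add_neg_cancel_comm])
    rw [add_neg_cancel_comm, v_neg hv_mul hx] at h'
    omega

lemma one_sub_ne_zero_and_v_eq_of_pos {x : K} (hx : x ≠ 0) (hvx : 0 < v x) :
    1 - x ≠ 0 ∧ v (1 - x) = 0 := by
  have hne : v 1 ≠ v (-x) := by rw [v_neg hv_mul hx, v_one hv_mul]; omega
  rw [sub_eq_add_neg, v_add_of_v_ne hv_mul hv_add one_ne_zero (neg_ne_zero.2 hx) hne,
    v_one hv_mul, v_neg hv_mul hx]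
  exact ⟨add_ne_zero_of_v_ne hv_mul one_ne_zero hne, by omega⟩

lemma v_mul_one_sub_of_neg {a : K} (ha : a ≠ 0) (hva : v a < 0) :
    v (a * (1 - a)) = 2 * v a := by
  have hv1 := v_one hv_mul
  have hne : v 1 ≠ v (-a) := by rw [v_neg hv_mul ha]; omega
  have h1a : v (1 - a) = v a := by
    rw [sub_eq_add_neg, v_add_of_v_ne hv_mul hv_add one_ne_zero (neg_ne_zero.2 ha) hne,
      v_neg hv_mul ha]
    omega
  rw [hv_mul _ _ ha (by rw [sub_eq_add_neg]; exact add_ne_zero_of_v_ne hv_mul one_ne_zero hne),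
    h1a]
  ring

lemma v_mul_one_sub_eq_or_nonneg {a : K} (ha : a ≠ 0) (ha1 : a ≠ 1) :
    v (a * (1 - a)) = 2 * v a ∨ 0 ≤ v (a * (1 - a)) := by
  rcases lt_or_ge (v a) 0 with hva | hva
  · exact Or.inl (v_mul_one_sub_of_neg hv_mul hv_add ha hva)
  · have h1a : 1 - a ≠ 0 := sub_ne_zero.2 (Ne.symm ha1)
    have h := hv_add 1 (-a) one_ne_zero (neg_ne_zero.2 ha) (by rwa [← sub_eq_add_neg])
    rw [v_one hv_mul, v_neg hv_mul ha, ← sub_eq_add_neg] at h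
    rw [hv_mul _ _ ha h1a]
    omega

lemma v_mul_one_sub_of_v_two_mul {a : K} (h2 : 0 < v 2) (h0 : 2 * a ≠ 0) (hv0 : v (2 * a) = 0) :
    a * (1 - a) ≠ 0 ∧ v (a * (1 - a)) = -2 * v 2 := by
  have ha := right_ne_zero_of_mul h0
  rw [hv_mul _ _ (left_ne_zero_of_mul h0) ha] at hv0
  have ha1 : a ≠ 1 := by rintro rfl; rw [v_one hv_mul] at hv0; omega
  refine ⟨mul_ne_zero ha (sub_ne_zero.2 (Ne.symm ha1)), ?_⟩
  rw [v_mul_one_sub_of_neg hv_mul hv_add ha (by omega)]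
  omega

theorem v_norm_le_of_trace_eq_one {π₀ t : K} (hπ₀_ne : π₀ ≠ 0) (hπ₀ : v π₀ = 1)
    (ht_ne : t ≠ 0) (hπ₀t : 1 ≤ v t) (ht2 : v t ≤ v 2) {a b : K} (h : 2 * a + b * t = 1) :
    v (a ^ 2 + a * b * t + b ^ 2 * π₀) ≤ 1 - 2 * v t := by
  have hnorm : a ^ 2 + a * b * t + b ^ 2 * π₀ = a * (1 - a) + b ^ 2 * π₀ := by
    linear_combination a * h
  rw [hnorm]
  by_cases hb : b = 0
  · subst hb
    have h2a : 2 * a = 1 := by simpa using h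
    obtain ⟨-, hX⟩ := v_mul_one_sub_of_v_two_mul hv_mul hv_add (by omega)
      (h2a ▸ one_ne_zero) (by rw [h2a, v_one hv_mul])
    rw [zero_pow two_ne_zero, zero_mul, add_zero, hX]
    omega
  have hY0 : b ^ 2 * π₀ ≠ 0 := mul_ne_zero (pow_ne_zero 2 hb) hπ₀_ne
  have hY : v (b ^ 2 * π₀) = 2 * v b + 1 := by
    rw [hv_mul _ _ (pow_ne_zero 2 hb) hπ₀_ne, v_pow hv_mul hb, hπ₀]
    push_cast
    ring
  have hbt := hv_mul b t hb ht_ne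
  rcases le_or_gt (v (b * t)) 0 with hle | hlt
  · by_cases hX0 : a * (1 - a) = 0
    · rw [hX0, zero_add]
      omega
    have ha1 : a ≠ 1 := fun h => hX0 (by rw [h, sub_self, mul_zero])
    have hX := v_mul_one_sub_eq_or_nonneg hv_mul hv_add (left_ne_zero_of_mul hX0) ha1
    rw [v_add_of_v_ne hv_mul hv_add hX0 hY0 (by omega)]
    omega
  · have h2a : 2 * a = 1 - b * t := by linear_combination h
    obtain ⟨h2a0, hv2a⟩ :=
      one_sub_ne_zero_and_v_eq_of_pos hv_mul hv_add (mul_ne_zero hb ht_ne) hlt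
    obtain ⟨hX0, hX⟩ := v_mul_one_sub_of_v_two_mul hv_mul hv_add (by omega)
      (h2a ▸ h2a0) (h2a ▸ hv2a)
    rw [v_add_of_v_ne hv_mul hv_add hX0 hY0 (by omega)]
    omega

end Valuation

section Conjugation

variable {K L : Type*} [CommRing K] [CommRing L] [Algebra K L] {t p : K} {π : L}
  {σ : L →ₐ[K] L}

lemma gen_mul_conj_gen (hπ : π ^ 2 = algebraMap K L t * π - algebraMap K L p)
    (hσ : σ π = algebraMap K L t - π) : π * σ π = algebraMap K L p := by
  rw [hσ]
  linear_combination -hπ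

lemma add_conj_eq_algebraMap (hσ : σ π = algebraMap K L t - π) (a b : K) :
    algebraMap K L a + algebraMap K L b * π + σ (algebraMap K L a + algebraMap K L b * π) =
      algebraMap K L (2 * a + b * t) := by
  simp only [map_add, map_mul, AlgHom.commutes, hσ, map_ofNat]
  ring

lemma mul_conj_eq_algebraMap (hπ : π ^ 2 = algebraMap K L t * π - algebraMap K L p)
    (hσ : σ π = algebraMap K L t - π) (a b : K) :
    (algebraMap K L a + algebraMap K L b * π) * σ (algebraMap K L a + algebraMap K L b * π) =
      algebraMap K L (a ^ 2 + a * b * t + b ^ 2 * p) := by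
  simp only [map_add, map_mul, map_pow, AlgHom.commutes, hσ]
  linear_combination -(algebraMap K L b) ^ 2 * hπ

end Conjugation

namespace AdjoinRoot

variable {K : Type*} [CommRing K]

lemma root_sq_eq (t p : K) :
    root (X ^ 2 - C t * X + C p) ^ 2 =
      algebraMap K _ t * root (X ^ 2 - C t * X + C p) - algebraMap K _ p := by
  have h := eval₂_root (X ^ 2 - C t * X + C p)
  simp only [eval₂_add, eval₂_sub, eval₂_mul, eval₂_pow, eval₂_X, eval₂_C,
    ← algebraMap_eq] at h
  linear_combination h

lemma exists_eq_algebraMap_add_mul_root [Nontrivial K] {q : K[X]} (hq : q.Monic)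
    (hdeg : q.natDegree = 2) (x : AdjoinRoot q) :
    ∃ a b : K, x = algebraMap K _ a + algebraMap K _ b * root q := by
  obtain ⟨f, rfl⟩ := mk_surjective x
  have hr : (f %ₘ q).degree ≤ 1 := by
    have h := degree_modByMonic_lt f hq
    rw [degree_eq_natDegree hq.ne_zero, hdeg] at h
    exact Order.le_of_lt_succ h
  refine ⟨(f %ₘ q).coeff 0, (f %ₘ q).coeff 1, ?_⟩
  rw [← mk_leftInverse hq (mk q f), modByMonicHom_mk]
  conv_lhs => rw [eq_X_add_C_of_degree_le_one hr]
  simp only [map_add, map_mul, mk_C, mk_X, algebraMap_eq]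
  ring

end AdjoinRoot

theorem stmt_3_general (F₀ : Type*) [Field F₀]
    (v : F₀ → ℤ)
    (hv_mul : ∀ a b : F₀, a ≠ 0 → b ≠ 0 → v (a * b) = v a + v b)
    (hv_add : ∀ a b : F₀, a ≠ 0 → b ≠ 0 → a + b ≠ 0 → min (v a) (v b) ≤ v (a + b))
    (π₀ : F₀) (hπ₀_ne : π₀ ≠ 0) (hπ₀ : v π₀ = 1)
    (t : F₀) (ht_ne : t ≠ 0) (hπ₀t : 1 ≤ v t) (ht2 : v t ≤ v 2)
    [hirr : Fact (Irreducible (X ^ 2 - C t * X + C π₀ : Polynomial F₀))]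
    (σ : AdjoinRoot (X ^ 2 - C t * X + C π₀ : Polynomial F₀) →ₐ[F₀]
        AdjoinRoot (X ^ 2 - C t * X + C π₀ : Polynomial F₀))
    (hσ : σ (AdjoinRoot.root _) =
      algebraMap F₀ _ t - AdjoinRoot.root (X ^ 2 - C t * X + C π₀ : Polynomial F₀)) :
    (∀ lam : AdjoinRoot (X ^ 2 - C t * X + C π₀ : Polynomial F₀),
      lam + σ lam = 1 →
      ∃ c : F₀, algebraMap F₀ _ c = lam * σ lam ∧ v c ≤ 1 - 2 * v t) ∧
    (((algebraMap F₀ _ t - AdjoinRoot.root (X ^ 2 - C t * X + C π₀ : Polynomial F₀)) /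
          algebraMap F₀ _ t) +
        σ ((algebraMap F₀ _ t - AdjoinRoot.root (X ^ 2 - C t * X + C π₀ : Polynomial F₀)) /
          algebraMap F₀ _ t) = 1 ∧
      ∃ c : F₀,
        algebraMap F₀ _ c =
          ((algebraMap F₀ _ t - AdjoinRoot.root (X ^ 2 - C t * X + C π₀ : Polynomial F₀)) /
              algebraMap F₀ _ t) *
            σ ((algebraMap F₀ _ t - AdjoinRoot.root (X ^ 2 - C t * X + C π₀ : Polynomial F₀)) /
              algebraMap F₀ _ t) ∧
        v c = 1 - 2 * v t) := by
  have hπ := AdjoinRoot.root_sq_eq t π₀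
  have hAt : algebraMap F₀ (AdjoinRoot (X ^ 2 - C t * X + C π₀)) t ≠ 0 :=
    (_root_.map_ne_zero _).2 ht_ne
  have hσ_lam₀ : σ ((algebraMap F₀ _ t - AdjoinRoot.root _) / algebraMap F₀ _ t) =
      AdjoinRoot.root _ / algebraMap F₀ _ t := by
    rw [map_div₀, map_sub, AlgHom.commutes, hσ, sub_sub_cancel]
  refine ⟨fun lam hlam => ?_, ?_, π₀ / t ^ 2, ?_, ?_⟩
  · obtain ⟨a, b, rfl⟩ := AdjoinRoot.exists_eq_algebraMap_add_mul_root
      (by monicity!) (by compute_degree!) lam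
    rw [add_conj_eq_algebraMap hσ] at hlam
    have htrace : 2 * a + b * t = 1 := (algebraMap F₀ _).injective (hlam.trans (map_one _).symm)
    exact ⟨_, (mul_conj_eq_algebraMap hπ hσ a b).symm,
      v_norm_le_of_trace_eq_one hv_mul hv_add hπ₀_ne hπ₀ ht_ne hπ₀t ht2 htrace⟩
  · rw [hσ_lam₀, ← add_div, sub_add_cancel, div_self hAt]
  · have hN : (algebraMap F₀ _ t - AdjoinRoot.root _) * AdjoinRoot.root _ =
        algebraMap F₀ (AdjoinRoot (X ^ 2 - C t * X + C π₀)) π₀ := by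
      rw [← hσ]
      exact (mul_comm _ _).trans (gen_mul_conj_gen hπ hσ)
    rw [hσ_lam₀, div_mul_div_comm, hN, map_div₀, map_pow, ← sq]
  · rw [v_div hv_mul hπ₀_ne (pow_ne_zero 2 ht_ne), v_pow hv_mul ht_ne, hπ₀]
    push_cast
    ring

/-- **(R-U) case of the Lemma on λ.**  Let `F₀` be a field of characteristic `0`
with a normalized discrete valuation `v`, valuation ring `O₀`, uniformizer `π₀` (so `v π₀ = 1`),
and residue field of characteristic `2` (so `v 2 ≥ 1`).  Let `t ∈ O₀` with `π₀ ∣ t` and `t ∣ 2`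
(expressed valuation-theoretically: `t ≠ 0`, `1 = v π₀ ≤ v t` and `v t ≤ v 2`).  Let
`F := F₀[X]/(X² − t·X + π₀)` (a field, since the polynomial is Eisenstein over `O₀`, hence
irreducible), let `π` be the class of `X`, let `σ` be the nontrivial `F₀`-automorphism of `F`
(so `σ π = t − π`), and `N(λ) = λ·σ(λ)` the norm.  Then every `λ ∈ F` with `λ + σ λ = 1` has
`N(λ) ∈ F₀` with `v (N λ) ≤ 1 − 2·v t`; moreover `λ₀ := (t − π)/t` satisfies `λ₀ + σ λ₀ = 1`
and `v (N λ₀) = 1 − 2·v t`. -/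
theorem stmt_3 (F₀ : Type*) [Field F₀] [CharZero F₀]
    (v : F₀ → ℤ)
    (hv_mul : ∀ a b : F₀, a ≠ 0 → b ≠ 0 → v (a * b) = v a + v b)
    (hv_add : ∀ a b : F₀, a ≠ 0 → b ≠ 0 → a + b ≠ 0 → min (v a) (v b) ≤ v (a + b))
    (π₀ : F₀) (hπ₀_ne : π₀ ≠ 0) (hπ₀ : v π₀ = 1)
    (h2 : 1 ≤ v 2)
    (t : F₀) (ht_ne : t ≠ 0) (hπ₀t : 1 ≤ v t) (ht2 : v t ≤ v 2)
    [hirr : Fact (Irreducible (X ^ 2 - C t * X + C π₀ : Polynomial F₀))]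
    (σ : AdjoinRoot (X ^ 2 - C t * X + C π₀ : Polynomial F₀) →ₐ[F₀]
        AdjoinRoot (X ^ 2 - C t * X + C π₀ : Polynomial F₀))
    (hσ : σ (AdjoinRoot.root _) =
      algebraMap F₀ _ t - AdjoinRoot.root (X ^ 2 - C t * X + C π₀ : Polynomial F₀)) :
    (∀ lam : AdjoinRoot (X ^ 2 - C t * X + C π₀ : Polynomial F₀),
      lam + σ lam = 1 →
      ∃ c : F₀, algebraMap F₀ _ c = lam * σ lam ∧ v c ≤ 1 - 2 * v t) ∧
    (((algebraMap F₀ _ t - AdjoinRoot.root (X ^ 2 - C t * X + C π₀ : Polynomial F₀)) /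
          algebraMap F₀ _ t) +
        σ ((algebraMap F₀ _ t - AdjoinRoot.root (X ^ 2 - C t * X + C π₀ : Polynomial F₀)) /
          algebraMap F₀ _ t) = 1 ∧
      ∃ c : F₀,
        algebraMap F₀ _ c =
          ((algebraMap F₀ _ t - AdjoinRoot.root (X ^ 2 - C t * X + C π₀ : Polynomial F₀)) /
              algebraMap F₀ _ t) *
            σ ((algebraMap F₀ _ t - AdjoinRoot.root (X ^ 2 - C t * X + C π₀ : Polynomial F₀)) /
              algebraMap F₀ _ t) ∧
        v c = 1 - 2 * v t) :=
  stmt_3_general F₀ v hv_mul hv_add π₀ hπ₀_ne hπ₀ t ht_ne hπ₀t ht2 (hirr := hirr) σ hσ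
end

section
/- Let F₀ be a field of characteristic 0 with normalized discrete valuation v, valuation ring O₀, uniformizer π₀, and residue field of characteristic 2 (so v(2) ≥ 1). Let F := F₀[X]/(X² + π₀) (a field, since X² + π₀ is Eisenstein over O₀), let π be the class of X, let σ be the nontrivial F₀-automorphism of F (so σ(π) = −π), and let N_{F/F₀}(λ) := λ·σ(λ) ∈ F₀ be the norm. Then for every λ ∈ F with λ + σ(λ) = 1 one has v(N_{F/F₀}(λ)) ≤ −2·v(2); moreover λ₀ := 1/2 satisfies λ₀ + σ(λ₀) = 1 and v(N_{F/F₀}(λ₀)) = −2·v(2). -/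
/-
Write `λ = a + bπ` with `a, b ∈ F₀`. Then `λ + σλ = 2a`, so the trace condition forces `a = 1/2`,
and `N(λ) = a² + π₀b²`. The two summands have valuations `-2·v 2` (even) and `2·v b + 1` (odd), so
they never cancel and `v (N λ)` is the smaller of the two, which is at most `-2·v 2`; equality holds
for `b = 0`, i.e. for `λ = 1/2`.
-/

open Polynomial

section Valuation

variable {K : Type*} [Field K] {v : K → ℤ}

theorem val_one (hv_mul : ∀ a b : K, a ≠ 0 → b ≠ 0 → v (a * b) = v a + v b) : v 1 = 0 := by
  have h := hv_mul 1 1 one_ne_zero one_ne_zero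
  rw [one_mul] at h
  omega

theorem val_inv (hv_mul : ∀ a b : K, a ≠ 0 → b ≠ 0 → v (a * b) = v a + v b) {x : K}
    (hx : x ≠ 0) : v x⁻¹ = -v x := by
  have h := hv_mul x x⁻¹ hx (inv_ne_zero hx)
  rw [mul_inv_cancel₀ hx, val_one hv_mul] at h
  omega

theorem val_neg (hv_mul : ∀ a b : K, a ≠ 0 → b ≠ 0 → v (a * b) = v a + v b) {x : K}
    (hx : x ≠ 0) : v (-x) = v x := by
  have h1 := hv_mul (-1) (-1) (neg_ne_zero.2 one_ne_zero) (neg_ne_zero.2 one_ne_zero)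
  have hx' := hv_mul (-1) x (neg_ne_zero.2 one_ne_zero) hx
  rw [neg_one_mul] at hx'
  rw [neg_one_mul, neg_neg, val_one hv_mul] at h1
  omega

theorem val_sq (hv_mul : ∀ a b : K, a ≠ 0 → b ≠ 0 → v (a * b) = v a + v b) {x : K}
    (hx : x ≠ 0) : v (x ^ 2) = 2 * v x := by
  rw [sq, hv_mul x x hx hx]
  ring

theorem val_add_eq_left_of_lt (hv_mul : ∀ a b : K, a ≠ 0 → b ≠ 0 → v (a * b) = v a + v b)
    (hv_add : ∀ a b : K, a ≠ 0 → b ≠ 0 → a + b ≠ 0 → min (v a) (v b) ≤ v (a + b))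
    {x y : K} (hx : x ≠ 0) (hy : y ≠ 0) (hlt : v x < v y) : v (x + y) = v x := by
  have hxy : x + y ≠ 0 := by
    intro h
    rw [eq_neg_of_add_eq_zero_left h, val_neg hv_mul hy] at hlt
    exact hlt.false
  have hle := hv_add x y hx hy hxy
  have hge := hv_add (x + y) (-y) hxy (neg_ne_zero.2 hy) (by simpa using hx)
  rw [add_neg_cancel_right, val_neg hv_mul hy] at hge
  omega

theorem val_sq_add_sq_mul_le (hv_mul : ∀ a b : K, a ≠ 0 → b ≠ 0 → v (a * b) = v a + v b)
    (hv_add : ∀ a b : K, a ≠ 0 → b ≠ 0 → a + b ≠ 0 → min (v a) (v b) ≤ v (a + b))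
    {π₀ : K} (hπ₀_ne : π₀ ≠ 0) (hπ₀ : Odd (v π₀)) {a : K} (ha : a ≠ 0) (b : K) :
    v (a ^ 2 + b ^ 2 * π₀) ≤ 2 * v a := by
  rcases eq_or_ne b 0 with rfl | hb
  · simp [val_sq hv_mul ha]
  have ha2 := pow_ne_zero 2 ha
  have hbπ := mul_ne_zero (pow_ne_zero 2 hb) hπ₀_ne
  have hval_ne : v (a ^ 2) ≠ v (b ^ 2 * π₀) := by
    rw [val_sq hv_mul ha, hv_mul _ _ (pow_ne_zero 2 hb) hπ₀_ne, val_sq hv_mul hb]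
    obtain ⟨k, hk⟩ := hπ₀
    omega
  rcases hval_ne.lt_or_gt with hlt | hgt
  · rw [val_add_eq_left_of_lt hv_mul hv_add ha2 hbπ hlt, val_sq hv_mul ha]
  · rw [add_comm, val_add_eq_left_of_lt hv_mul hv_add hbπ ha2 hgt]
    rw [val_sq hv_mul ha] at hgt
    exact hgt.le

end Valuation

namespace AdjoinRoot

variable {R : Type*} [CommRing R] {c : R}

theorem root_sq_of_X_sq_add_C : root (X ^ 2 + C c) ^ 2 = -algebraMap R _ c := by
  have h := mk_self (f := X ^ 2 + C c)
  rw [map_add, map_pow, mk_X, mk_C, ← algebraMap_eq] at h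
  exact eq_neg_of_add_eq_zero_left h

theorem exists_eq_algebraMap_add_algebraMap_mul_root [Nontrivial R]
    (x : AdjoinRoot (X ^ 2 + C c)) :
    ∃ a b : R, x = algebraMap R _ a + algebraMap R _ b * root (X ^ 2 + C c) := by
  have hmonic : (X ^ 2 + C c).Monic := monic_X_pow_add_C c two_ne_zero
  have hdim : (powerBasis' hmonic).dim = 2 := natDegree_X_pow_add_C
  let basis := (powerBasis' hmonic).basis.reindex (finCongr hdim)
  refine ⟨basis.repr x 0, basis.repr x 1, ?_⟩
  conv_lhs => rw [← basis.sum_repr x]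
  simp [basis, Fin.sum_univ_two, Algebra.smul_def, mul_comm]

theorem add_conj_of_eq_algebraMap_add_mul_root
    (σ : AdjoinRoot (X ^ 2 + C c) →ₐ[R] AdjoinRoot (X ^ 2 + C c))
    (hσ : σ (root _) = -root (X ^ 2 + C c)) {x : AdjoinRoot (X ^ 2 + C c)} {a b : R}
    (hx : x = algebraMap R _ a + algebraMap R _ b * root (X ^ 2 + C c)) :
    x + σ x = algebraMap R _ (2 * a) := by
  simp only [hx, map_add, map_mul, hσ, AlgHom.commutes, map_ofNat]
  ring

theorem mul_conj_of_eq_algebraMap_add_mul_root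
    (σ : AdjoinRoot (X ^ 2 + C c) →ₐ[R] AdjoinRoot (X ^ 2 + C c))
    (hσ : σ (root _) = -root (X ^ 2 + C c)) {x : AdjoinRoot (X ^ 2 + C c)} {a b : R}
    (hx : x = algebraMap R _ a + algebraMap R _ b * root (X ^ 2 + C c)) :
    x * σ x = algebraMap R _ (a ^ 2 + b ^ 2 * c) := by
  simp only [hx, map_add, map_mul, map_pow, hσ, AlgHom.commutes]
  linear_combination (-algebraMap R _ b ^ 2) * root_sq_of_X_sq_add_C (c := c)

end AdjoinRoot

theorem stmt_4_general (F₀ : Type*) [Field F₀] [CharZero F₀]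
    (v : F₀ → ℤ)
    (hv_mul : ∀ a b : F₀, a ≠ 0 → b ≠ 0 → v (a * b) = v a + v b)
    (hv_add : ∀ a b : F₀, a ≠ 0 → b ≠ 0 → a + b ≠ 0 → min (v a) (v b) ≤ v (a + b))
    (π₀ : F₀) (hπ₀_ne : π₀ ≠ 0) (hπ₀ : v π₀ = 1)
    [hirr : Fact (Irreducible (X ^ 2 + C π₀ : Polynomial F₀))]
    (σ : AdjoinRoot (X ^ 2 + C π₀ : Polynomial F₀) →ₐ[F₀]
        AdjoinRoot (X ^ 2 + C π₀ : Polynomial F₀))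
    (hσ : σ (AdjoinRoot.root _) = -AdjoinRoot.root (X ^ 2 + C π₀ : Polynomial F₀)) :
    (∀ lam : AdjoinRoot (X ^ 2 + C π₀ : Polynomial F₀),
      lam + σ lam = 1 →
      ∃ c : F₀, algebraMap F₀ _ c = lam * σ lam ∧ v c ≤ -(2 * v 2)) ∧
    (((1 : AdjoinRoot (X ^ 2 + C π₀ : Polynomial F₀)) / 2) + σ ((1 : AdjoinRoot _) / 2) = 1 ∧
      ∃ c : F₀,
        algebraMap F₀ _ c =
          ((1 : AdjoinRoot (X ^ 2 + C π₀ : Polynomial F₀)) / 2) * σ ((1 : AdjoinRoot _) / 2) ∧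
        v c = -(2 * v 2)) := by
  have hv_half : v 2⁻¹ = -v 2 := val_inv hv_mul two_ne_zero
  refine ⟨fun lam hlam => ?_, ?_⟩
  · obtain ⟨a, b, hlam_eq⟩ := AdjoinRoot.exists_eq_algebraMap_add_algebraMap_mul_root lam
    have ha : a = 2⁻¹ := by
      have h2a : algebraMap F₀ (AdjoinRoot (X ^ 2 + C π₀)) (2 * a) = algebraMap F₀ _ 1 := by
        rw [← AdjoinRoot.add_conj_of_eq_algebraMap_add_mul_root σ hσ hlam_eq, hlam, map_one]
      exact eq_inv_of_mul_eq_one_right ((algebraMap F₀ _).injective h2a)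
    refine ⟨a ^ 2 + b ^ 2 * π₀,
      (AdjoinRoot.mul_conj_of_eq_algebraMap_add_mul_root σ hσ hlam_eq).symm, ?_⟩
    calc v (a ^ 2 + b ^ 2 * π₀)
        ≤ 2 * v a := val_sq_add_sq_mul_le hv_mul hv_add hπ₀_ne (hπ₀ ▸ odd_one)
            (ha ▸ inv_ne_zero two_ne_zero) b
      _ = -(2 * v 2) := by rw [ha, hv_half]; ring
  · have hhalf : (1 : AdjoinRoot (X ^ 2 + C π₀)) / 2 = algebraMap F₀ _ 2⁻¹ := by
      rw [one_div, map_inv₀, map_ofNat]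
    rw [hhalf, AlgHom.commutes, ← map_add, ← map_mul]
    refine ⟨by norm_num, 2⁻¹ * 2⁻¹, rfl, ?_⟩
    rw [hv_mul _ _ (inv_ne_zero two_ne_zero) (inv_ne_zero two_ne_zero), hv_half]
    ring

/-- **(R-P) case of the Lemma on λ.**  Let `F₀` be a field of characteristic `0`
with a normalized discrete valuation `v`, valuation ring `O₀`, uniformizer `π₀` (so `v π₀ = 1`),
and residue field of characteristic `2` (so `v 2 ≥ 1`).  Let `F := F₀[X]/(X² + π₀)` (a field,
since `X² + π₀` is Eisenstein over `O₀`, hence irreducible), let `π` be the class of `X`, let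
`σ` be the nontrivial `F₀`-automorphism of `F` (so `σ π = −π`), and `N(λ) = λ·σ(λ)` the norm.
Then every `λ ∈ F` with `λ + σ λ = 1` has `N(λ) ∈ F₀` with `v (N λ) ≤ −2·v 2`; moreover
`λ₀ := 1/2` satisfies `λ₀ + σ λ₀ = 1` and `v (N λ₀) = −2·v 2`. -/
theorem stmt_4 (F₀ : Type*) [Field F₀] [CharZero F₀]
    (v : F₀ → ℤ)
    (hv_mul : ∀ a b : F₀, a ≠ 0 → b ≠ 0 → v (a * b) = v a + v b)
    (hv_add : ∀ a b : F₀, a ≠ 0 → b ≠ 0 → a + b ≠ 0 → min (v a) (v b) ≤ v (a + b))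
    (π₀ : F₀) (hπ₀_ne : π₀ ≠ 0) (hπ₀ : v π₀ = 1)
    (h2 : 1 ≤ v 2)
    [hirr : Fact (Irreducible (X ^ 2 + C π₀ : Polynomial F₀))]
    (σ : AdjoinRoot (X ^ 2 + C π₀ : Polynomial F₀) →ₐ[F₀]
        AdjoinRoot (X ^ 2 + C π₀ : Polynomial F₀))
    (hσ : σ (AdjoinRoot.root _) = -AdjoinRoot.root (X ^ 2 + C π₀ : Polynomial F₀)) :
    (∀ lam : AdjoinRoot (X ^ 2 + C π₀ : Polynomial F₀),
      lam + σ lam = 1 →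
      ∃ c : F₀, algebraMap F₀ _ c = lam * σ lam ∧ v c ≤ -(2 * v 2)) ∧
    (((1 : AdjoinRoot (X ^ 2 + C π₀ : Polynomial F₀)) / 2) + σ ((1 : AdjoinRoot _) / 2) = 1 ∧
      ∃ c : F₀,
        algebraMap F₀ _ c =
          ((1 : AdjoinRoot (X ^ 2 + C π₀ : Polynomial F₀)) / 2) * σ ((1 : AdjoinRoot _) / 2) ∧
        v c = -(2 * v 2)) :=
  stmt_4_general F₀ v hv_mul hv_add π₀ hπ₀_ne hπ₀ (hirr := hirr) σ hσ
end

section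
/- Let R be a commutative ring, let π, π̄ ∈ R, set t := π + π̄ and π₀ := π·π̄, and let X be an n×n matrix over R (n ≥ 1) such that every 2×2 minor of X + π·I_n is zero and trace(X + π·I_n) = π − π̄. Then X² + t·X + π₀·I_n = 0. -/
/-- Let `R` be a commutative ring, `π, π̄ ∈ R`, set `t := π + π̄` and
`π₀ := π·π̄`, and let `X` be an `n × n` matrix over `R` (`n ≥ 1`) such that every `2 × 2` minor
of `X + π·1` vanishes and `trace (X + π·1) = π − π̄`.  Then `X² + t·X + π₀·1 = 0`. -/
theorem stmt_6 (R : Type*) [CommRing R] (n : ℕ) (hn : 1 ≤ n) (π πb : R)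
    (X : Matrix (Fin n) (Fin n) R)
    (hwedge : ∀ a b c d : Fin n,
      (X + π • (1 : Matrix (Fin n) (Fin n) R)) a c * (X + π • 1) b d -
        (X + π • 1) a d * (X + π • 1) b c = 0)
    (htrace : Matrix.trace (X + π • (1 : Matrix (Fin n) (Fin n) R)) = π - πb) :
    X * X + (π + πb) • X + (π * πb) • (1 : Matrix (Fin n) (Fin n) R) = 0 := by
  set Y := X + π • (1 : Matrix (Fin n) (Fin n) R) with hY
  have hYY : Y * Y = (π - πb) • Y := by
    ext i j
    simp only [Matrix.mul_apply, Matrix.smul_apply, smul_eq_mul]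
    have h1 : ∀ b, Y i b * Y b j = Y i j * Y b b := by
      intro b
      have := hwedge i b b j
      linear_combination this
    rw [Finset.sum_congr rfl (fun b _ => h1 b), ← Finset.mul_sum]
    have h2 : ∑ b, Y b b = π - πb := htrace
    rw [h2]; ring
  have hX : X = Y - π • 1 := by simp [hY]
  rw [hX, sub_mul, mul_sub, hYY]
  simp only [smul_sub, sub_smul, smul_smul, Matrix.smul_mul, Matrix.mul_smul,
    Matrix.mul_one, Matrix.one_mul]
  module
end

section
/- Let k be a field of characteristic 2 and m ≥ 1 an integer. In the polynomial ring P := k[y_{ij} (1 ≤ i,j ≤ 2m), x₁, …, x_{2m}], write Y for the 2m×2m matrix (y_{ij}), x for the row (x₁,…,x_{2m}), set α := Σ_{i=1}^m y_{i, 2m+1−i}, and let M be the 2m×2m matrix with entries M_{ij} := α·y_{ij} + x_i·x_j. Let J₁ ⊆ P be the ideal generated by all 2×2 minors of the (2m+1)×2m matrix obtained by stacking Y on top of the row x, all entries of Y − Yᵗ, and the diagonal entries M_{11}, …, M_{2m,2m} of M; let J₂ ⊆ P be the ideal generated by the same minors, the entries of Y − Yᵗ, and all entries M_{ij} of M. Then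 J₁ ⊆ J₂, every M_{ij} satisfies M_{ij}² ∈ J₁, and consequently the radicals of J₁ and J₂ coincide. -/
open MvPolynomial

namespace Stmt7

variable (k : Type*) [CommRing k] (m : ℕ)

/-- The polynomial ring `P = k[y_{ij} (1 ≤ i,j ≤ 2m), x₁, …, x_{2m}]`. -/
abbrev P := MvPolynomial ((Fin (2 * m) × Fin (2 * m)) ⊕ Fin (2 * m)) k

/-- The matrix of variables `Y = (y_{ij})`. -/
noncomputable def Y : Matrix (Fin (2 * m)) (Fin (2 * m)) (P k m) :=
  Matrix.of fun i j => X (Sum.inl (i, j))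

/-- The row of variables `x = (x₁, …, x_{2m})`. -/
noncomputable def x : Fin (2 * m) → P k m := fun i => X (Sum.inr i)

/-- The `(2m+1) × 2m` matrix obtained by stacking `Y` on top of the row `x`. -/
noncomputable def stacked : Matrix (Fin (2 * m + 1)) (Fin (2 * m)) (P k m) :=
  Matrix.of fun i j =>
    if h : (i : ℕ) < 2 * m then Y k m ⟨(i : ℕ), h⟩ j else x k m j

/-- The set of `2 × 2` minors of the stacked matrix. -/
def minors : Set (P k m) :=
  {r | ∃ (a b : Fin (2 * m + 1)) (c d : Fin (2 * m)),
    r = stacked k m a c * stacked k m b d - stacked k m a d * stacked k m b c}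

/-- `α = Σ_{i=1}^m y_{i, 2m+1−i}` (in zero-based indexing: `Σ_{i=0}^{m−1} y_{i, 2m−1−i}`). -/
noncomputable def alpha : P k m :=
  ∑ i : Fin m, Y k m (Fin.castLE (by omega) i) (Fin.rev (Fin.castLE (by omega) i))

/-- The matrix `M` with `M_{ij} = α·y_{ij} + x_i·x_j`. -/
noncomputable def Mmat : Matrix (Fin (2 * m)) (Fin (2 * m)) (P k m) :=
  Matrix.of fun i j => alpha k m * Y k m i j + x k m i * x k m j

/-- The ideal `J₁`, generated by the `2 × 2` minors of the stacked matrix, the entries of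
`Y − Yᵀ`, and the diagonal entries of `M`. -/
noncomputable def J1 : Ideal (P k m) :=
  Ideal.span (minors k m ∪
    {r | ∃ i j : Fin (2 * m), r = Y k m i j - Y k m j i} ∪
    {r | ∃ i : Fin (2 * m), r = Mmat k m i i})

/-- The ideal `J₂`, generated by the `2 × 2` minors of the stacked matrix, the entries of
`Y − Yᵀ`, and all entries of `M`. -/
noncomputable def J2 : Ideal (P k m) :=
  Ideal.span (minors k m ∪
    {r | ∃ i j : Fin (2 * m), r = Y k m i j - Y k m j i} ∪
    {r | ∃ i j : Fin (2 * m), r = Mmat k m i j})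

end Stmt7

/-! Expanding the squares gives
`M_{ij}² − M_{ii} M_{jj} = α² (y_{ij}² − y_{ii} y_{jj}) + α (2 y_{ij} x_i x_j − y_{ii} x_j² − y_{jj} x_i²)`,
and modulo the relations `y_{ij} = y_{ji}` both brackets are combinations of `2 × 2` minors of `Y`
stacked over `x`. So `M_{ij}² ∈ J₁`: every extra generator of `J₂` lies in the radical of `J₁`. -/

theorem sq_mem_of_diag_mem_of_minors_mem {R : Type*} [CommRing R] {I : Ideal R}
    {a yii yij yji yjj xi xj : R} (hii : a * yii + xi * xi ∈ I) (hsymm : yij - yji ∈ I)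
    (hY : yii * yjj - yij * yji ∈ I) (hxi : yii * xj - yij * xi ∈ I)
    (hxj : yjj * xi - yji * xj ∈ I) :
    (a * yij + xi * xj) ^ 2 ∈ I := by
  have key : (a * yij + xi * xj) ^ 2 =
      (a * yii + xi * xi) * (a * yjj + xj * xj) + (a ^ 2 * yij + a * xi * xj) * (yij - yji)
        - a ^ 2 * (yii * yjj - yij * yji) - a * xj * (yii * xj - yij * xi)
        - a * xi * (yjj * xi - yji * xj) := by
    ring
  rw [key]
  refine sub_mem (sub_mem (sub_mem (add_mem ?_ ?_) ?_) ?_) ?_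
  · exact I.mul_mem_right _ hii
  · exact I.mul_mem_left _ hsymm
  · exact I.mul_mem_left _ hY
  · exact I.mul_mem_left _ hxi
  · exact I.mul_mem_left _ hxj

namespace Stmt7

variable {k : Type*} [CommRing k] {m : ℕ}

lemma stacked_castSucc (a c : Fin (2 * m)) : stacked k m a.castSucc c = Y k m a c := by
  simp [stacked]

lemma stacked_last (c : Fin (2 * m)) : stacked k m (Fin.last (2 * m)) c = x k m c := by
  simp [stacked]

lemma Y_minor_mem_J1 (a b c d : Fin (2 * m)) :
    Y k m a c * Y k m b d - Y k m a d * Y k m b c ∈ J1 k m :=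
  Ideal.subset_span <| .inl <| .inl
    ⟨a.castSucc, b.castSucc, c, d, by simp only [stacked_castSucc]⟩

lemma Y_x_minor_mem_J1 (a c d : Fin (2 * m)) :
    Y k m a c * x k m d - Y k m a d * x k m c ∈ J1 k m :=
  Ideal.subset_span <| .inl <| .inl
    ⟨a.castSucc, Fin.last _, c, d, by simp only [stacked_castSucc, stacked_last]⟩

lemma Y_sub_Y_mem_J1 (i j : Fin (2 * m)) : Y k m i j - Y k m j i ∈ J1 k m :=
  Ideal.subset_span <| .inl <| .inr ⟨i, j, rfl⟩

lemma Mmat_diag_mem_J1 (i : Fin (2 * m)) : Mmat k m i i ∈ J1 k m :=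
  Ideal.subset_span <| .inr ⟨i, rfl⟩

lemma Mmat_sq_mem_J1 (i j : Fin (2 * m)) : Mmat k m i j ^ 2 ∈ J1 k m :=
  sq_mem_of_diag_mem_of_minors_mem (Mmat_diag_mem_J1 i) (Y_sub_Y_mem_J1 i j)
    (Y_minor_mem_J1 i j i j) (Y_x_minor_mem_J1 i i j) (Y_x_minor_mem_J1 j j i)

lemma J1_le_J2 : J1 k m ≤ J2 k m := by
  refine Ideal.span_mono ?_
  rintro r (hr | ⟨i, rfl⟩)
  · exact .inl hr
  · exact .inr ⟨i, i, rfl⟩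

lemma J2_le_radical_J1 : J2 k m ≤ (J1 k m).radical := by
  refine Ideal.span_le.2 ?_
  rintro r (hr | ⟨i, j, rfl⟩)
  · exact Ideal.le_radical (Ideal.subset_span (.inl hr))
  · exact ⟨2, Mmat_sq_mem_J1 i j⟩

end Stmt7

theorem stmt_7_general (k : Type*) [Field k] (m : ℕ) :
    Stmt7.J1 k m ≤ Stmt7.J2 k m ∧
    (∀ i j : Fin (2 * m), Stmt7.Mmat k m i j ^ 2 ∈ Stmt7.J1 k m) ∧
    (Stmt7.J1 k m).radical = (Stmt7.J2 k m).radical :=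
  ⟨Stmt7.J1_le_J2, Stmt7.Mmat_sq_mem_J1,
    le_antisymm (Ideal.radical_mono Stmt7.J1_le_J2)
      (Ideal.radical_le_radical_iff.2 Stmt7.J2_le_radical_J1)⟩

/-- Let `k` be a field of characteristic `2` and `m ≥ 1`.  In
`P = k[y_{ij}, x_i]`, with `α = Σ_{i=1}^m y_{i,2m+1−i}` and `M_{ij} = α y_{ij} + x_i x_j`, let
`J₁` be the ideal generated by the `2 × 2` minors of the `(2m+1) × 2m` matrix stacking `Y` over
the row `x`, the entries of `Y − Yᵀ`, and the diagonal entries of `M`; and let `J₂` be generated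
by the same minors, the entries of `Y − Yᵀ`, and all entries of `M`.  Then `J₁ ⊆ J₂`, every
`M_{ij}` satisfies `M_{ij}² ∈ J₁`, and consequently `J₁` and `J₂` have the same radical. -/
theorem stmt_7 (k : Type*) [Field k] [CharP k 2] (m : ℕ) (hm : 1 ≤ m) :
    Stmt7.J1 k m ≤ Stmt7.J2 k m ∧
    (∀ i j : Fin (2 * m), Stmt7.Mmat k m i j ^ 2 ∈ Stmt7.J1 k m) ∧
    (Stmt7.J1 k m).radical = (Stmt7.J2 k m).radical :=
  stmt_7_general k m
end

section
/- Let A be a commutative ring and m ≥ 1. Let H_m denote the m×m antidiagonal identity matrix and J := [[0, H_m],[−H_m, 0]] ∈ M_{2m}(A) (so J² = −I_{2m}). Let P := A[ỹ_{ij} (1 ≤ i,j ≤ 2m), x₁,…,x_{2m}], write Ỹ for the matrix (ỹ_{ij}) and x for the row (x₁,…,x_{2m}), and let I ⊆ P be the ideal generated by: all 2×2 minors of the (2m+1)×2m matrix obtained by stacking Ỹ on top of the row x; all entries of J·Ỹ + Ỹᵗ·J; and all entries of xᵗ·x + Ỹᵗ·J (where xᵗx has (i,j)-entry x_i x_j).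 Then the A-algebra P/I is isomorphic to the polynomial ring A[x₁,…,x_{2m}], via the map sending each x_i to x_i and the class of Ỹ to −J·xᵗ·x. In particular, P/I is a smooth A-algebra, isomorphic to the coordinate ring of affine (2m)-space over A. -/
open MvPolynomial Matrix

namespace Stmt8

variable (A : Type*) [CommRing A] (m : ℕ)

/-- The matrix `J = [[0, H_m], [−H_m, 0]]`, where `H_m` is the `m × m` antidiagonal identity:
`J i j = ±1` if `i + j = 2m − 1` (sign `+` for `i < m`, `−` for `i ≥ m`), and `0` otherwise. -/
def Jmat (R : Type*) [CommRing R] : Matrix (Fin (2 * m)) (Fin (2 * m)) R :=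
  Matrix.of fun i j =>
    if (i : ℕ) + (j : ℕ) = 2 * m - 1 then (if (i : ℕ) < m then 1 else -1) else 0

/-- The polynomial ring `P = A[ỹ_{ij} (1 ≤ i,j ≤ 2m), x₁, …, x_{2m}]`. -/
abbrev P := MvPolynomial ((Fin (2 * m) × Fin (2 * m)) ⊕ Fin (2 * m)) A

/-- The matrix of variables `Ỹ = (ỹ_{ij})`. -/
noncomputable def Yt : Matrix (Fin (2 * m)) (Fin (2 * m)) (P A m) :=
  Matrix.of fun i j => X (Sum.inl (i, j))

/-- The row of variables `x = (x₁, …, x_{2m})`. -/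
noncomputable def x : Fin (2 * m) → P A m := fun i => X (Sum.inr i)

/-- The `(2m+1) × 2m` matrix obtained by stacking `Ỹ` on top of the row `x`. -/
noncomputable def stacked : Matrix (Fin (2 * m + 1)) (Fin (2 * m)) (P A m) :=
  Matrix.of fun i j =>
    if h : (i : ℕ) < 2 * m then Yt A m ⟨(i : ℕ), h⟩ j else x A m j

/-- The matrix `xᵗ·x` with `(i,j)`-entry `x_i·x_j`. -/
noncomputable def xtx : Matrix (Fin (2 * m)) (Fin (2 * m)) (P A m) :=
  Matrix.of fun i j => x A m i * x A m j

/-- The ideal `I`, generated by: all `2 × 2` minors of the stacked matrix; all entries of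
`J·Ỹ + Ỹᵀ·J`; and all entries of `xᵗ·x + Ỹᵀ·J`. -/
noncomputable def I : Ideal (P A m) :=
  Ideal.span
    ({r | ∃ (a b : Fin (2 * m + 1)) (c d : Fin (2 * m)),
        r = stacked A m a c * stacked A m b d - stacked A m a d * stacked A m b c} ∪
      {r | ∃ i j : Fin (2 * m),
        r = (Jmat m (P A m) * Yt A m + (Yt A m)ᵀ * Jmat m (P A m)) i j} ∪
      {r | ∃ i j : Fin (2 * m),
        r = (xtx A m + (Yt A m)ᵀ * Jmat m (P A m)) i j})

/-- The matrix `−J·xᵗ·x` over the polynomial ring `A[x₁, …, x_{2m}]`. -/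
noncomputable def targetY : Matrix (Fin (2 * m)) (Fin (2 * m)) (MvPolynomial (Fin (2 * m)) A) :=
  -(Jmat m (MvPolynomial (Fin (2 * m)) A) * Matrix.of fun i j => X i * X j)

end Stmt8

/-!
Send `x ↦ x` and `Ỹ ↦ −J·xᵗx`. For any `J` with `J² = −1`, `Jᵀ = −J` and any symmetric `S`,
the two linear relations `J·Y + Yᵀ·J = 0`, `S + Yᵀ·J = 0` are equivalent to `Y = −J·S`
(they give `J·Y = S`, then multiply by `J`). With `S = xᵗx` the backward direction shows that
the map `P → A[x]` kills the linear generators of `I`; it kills the minors since every row of the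
stacked matrix becomes a multiple of `x`. In `P/I` the forward direction gives `Ỹ = −J·xᵗx`, so
`P/I` is generated by the `xᵢ` and `xᵢ ↦ xᵢ` is an inverse. Smoothness is transported from `A[x]`.
-/

namespace Matrix

theorem vecMulVec_minor_eq_zero {m n R : Type*} [CommRing R] (u : m → R) (v : n → R)
    (a b : m) (c d : n) :
    vecMulVec u v a c * vecMulVec u v b d - vecMulVec u v a d * vecMulVec u v b c = 0 := by
  simp only [vecMulVec_apply]
  ring

theorem map_mk_eq_zero {n p R : Type*} [CommRing R] {I : Ideal R} {M : Matrix n p R}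
    (h : ∀ i j, M i j ∈ I) : M.map (Ideal.Quotient.mk I) = 0 := by
  ext i j : 1
  exact Ideal.Quotient.eq_zero_iff_mem.mpr (h i j)

variable {n R : Type*} [Fintype n] [DecidableEq n] [CommRing R] {J Y S : Matrix n n R}

theorem relations_iff_eq_neg_mul (hJJ : J * J = -1) (hJt : Jᵀ = -J) (hS : Sᵀ = S) :
    J * Y + Yᵀ * J = 0 ∧ S + Yᵀ * J = 0 ↔ Y = -(J * S) := by
  constructor
  · rintro ⟨hJY, hSY⟩
    have hSJY : S = J * Y := by
      rw [eq_neg_of_add_eq_zero_left hSY, eq_neg_of_add_eq_zero_right hJY, neg_neg]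
    rw [hSJY, ← Matrix.mul_assoc, hJJ, Matrix.neg_mul, Matrix.one_mul, neg_neg]
  · rintro rfl
    have hYt : (-(J * S))ᵀ = S * J := by
      rw [transpose_neg, transpose_mul, hS, hJt, Matrix.mul_neg, neg_neg]
    rw [hYt, Matrix.mul_assoc, hJJ, Matrix.mul_neg, ← Matrix.mul_assoc, hJJ]
    simp

end Matrix

instance MvPolynomial.instSmooth {R σ : Type*} [CommRing R] [Finite σ] :
    Algebra.Smooth R (MvPolynomial σ R) := {}

namespace Stmt8

section Jmat

variable (m : ℕ) (R : Type*) [CommRing R]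

theorem Jmat_apply (i j : Fin (2 * m)) :
    Jmat m R i j = if j = i.rev then (if (i : ℕ) < m then 1 else -1) else 0 := by
  have : (i : ℕ) + j = 2 * m - 1 ↔ j = i.rev := by
    rw [Fin.ext_iff, Fin.val_rev]; omega
  simp only [Jmat, of_apply, this]

theorem val_rev_lt_iff (i : Fin (2 * m)) : (i.rev : ℕ) < m ↔ ¬(i : ℕ) < m := by
  rw [Fin.val_rev]; omega

theorem Jmat_transpose : (Jmat m R)ᵀ = -Jmat m R := by
  ext i j : 1
  by_cases hj : j = i.rev
  · subst hj
    simp only [transpose_apply, Matrix.neg_apply, Jmat_apply, Fin.rev_rev, val_rev_lt_iff]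
    split_ifs <;> simp
  · have hi : i ≠ j.rev := fun h => hj (Fin.rev_eq_iff.mp h.symm)
    simp [Jmat_apply, hi, hj]

theorem Jmat_mul_self : Jmat m R * Jmat m R = -1 := by
  ext i j : 1
  simp only [mul_apply, Jmat_apply, ite_mul, zero_mul, Finset.sum_ite_eq', Finset.mem_univ,
    if_true, Fin.rev_rev, Matrix.neg_apply, one_apply]
  by_cases hij : i = j
  · subst hij
    simp only [val_rev_lt_iff]
    split_ifs <;> simp
  · simp [hij, Ne.symm hij]

theorem map_Jmat {S F : Type*} [CommRing S] [FunLike F R S] [RingHomClass F R S] (f : F) :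
    (Jmat m R).map f = Jmat m S := by
  ext i j : 1
  simp only [map_apply, Jmat_apply]
  split_ifs <;> simp

end Jmat

variable (A : Type*) [CommRing A] (m : ℕ)

theorem targetY_eq_neg_mul : targetY A m = -(Jmat m _ * vecMulVec X X) :=
  rfl

theorem targetY_eq_vecMulVec : targetY A m = vecMulVec (-(Jmat m _ *ᵥ X)) X := by
  rw [targetY_eq_neg_mul, mul_vecMulVec, neg_vecMulVec]

theorem xtx_transpose : (xtx A m)ᵀ = xtx A m := by
  ext i j : 1
  exact mul_comm _ _

noncomputable def toPoly : P A m →ₐ[A] MvPolynomial (Fin (2 * m)) A :=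
  aeval (Sum.elim (fun p => targetY A m p.1 p.2) X)

theorem map_Yt_toPoly : (Yt A m).map (toPoly A m) = targetY A m := by
  ext i j : 1
  simp [toPoly, Yt]

theorem map_xtx_toPoly :
    (xtx A m).map (toPoly A m) =
      vecMulVec (X : Fin (2 * m) → MvPolynomial (Fin (2 * m)) A) X := by
  ext i j : 1
  simp [toPoly, xtx, x, vecMulVec_apply]

theorem map_stacked_toPoly :
    (stacked A m).map (toPoly A m) = vecMulVec (Fin.snoc (-(Jmat m _ *ᵥ X)) 1) X := by
  ext a j : 1
  induction a using Fin.lastCases with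
  | last => simp [stacked, toPoly, x, vecMulVec_apply]
  | cast i =>
    have := congr_fun₂ (map_Yt_toPoly A m) i j
    rw [targetY_eq_vecMulVec] at this
    simpa [stacked, vecMulVec_apply] using this

theorem I_le_ker_toPoly : I A m ≤ RingHom.ker (toPoly A m) := by
  obtain ⟨hJY, hSY⟩ :=
    (relations_iff_eq_neg_mul (Y := targetY A m) (Jmat_mul_self m _) (Jmat_transpose m _)
      (transpose_vecMulVec _ _)).mpr (targetY_eq_neg_mul A m)
  rw [I, Ideal.span_le]
  rintro r ((⟨a, b, c, d, rfl⟩ | ⟨i, j, rfl⟩) | ⟨i, j, rfl⟩) <;>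
    rw [SetLike.mem_coe, RingHom.mem_ker]
  · have := vecMulVec_minor_eq_zero
      (Fin.snoc (-(Jmat m (MvPolynomial (Fin (2 * m)) A) *ᵥ X)) 1) X a b c d
    rw [← map_stacked_toPoly] at this
    simpa only [map_apply, map_sub, map_mul] using this
  · change (Jmat m (P A m) * Yt A m + (Yt A m)ᵀ * Jmat m (P A m)).map (toPoly A m) i j = 0
    rw [Matrix.map_add _ (map_add _), Matrix.map_mul, Matrix.map_mul, transpose_map, map_Jmat,
      map_Yt_toPoly, hJY, Matrix.zero_apply]
  · change (xtx A m + (Yt A m)ᵀ * Jmat m (P A m)).map (toPoly A m) i j = 0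
    rw [Matrix.map_add _ (map_add _), Matrix.map_mul, transpose_map, map_Jmat, map_Yt_toPoly,
      map_xtx_toPoly, hSY, Matrix.zero_apply]

theorem map_Yt_mk : (Yt A m).map (Ideal.Quotient.mk (I A m)) =
    -(Jmat m _ * (xtx A m).map (Ideal.Quotient.mk (I A m))) := by
  have hJY : (Jmat m (P A m) * Yt A m + (Yt A m)ᵀ * Jmat m (P A m)).map
      (Ideal.Quotient.mk (I A m)) = 0 :=
    map_mk_eq_zero fun i j => Ideal.subset_span (Or.inl (Or.inr ⟨i, j, rfl⟩))
  have hSY : (xtx A m + (Yt A m)ᵀ * Jmat m (P A m)).map (Ideal.Quotient.mk (I A m)) = 0 :=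
    map_mk_eq_zero fun i j => Ideal.subset_span (Or.inr ⟨i, j, rfl⟩)
  rw [Matrix.map_add _ (map_add _), Matrix.map_mul, Matrix.map_mul, transpose_map, map_Jmat] at hJY
  rw [Matrix.map_add _ (map_add _), Matrix.map_mul, transpose_map, map_Jmat] at hSY
  refine (relations_iff_eq_neg_mul (Jmat_mul_self m _) (Jmat_transpose m _) ?_).mp ⟨hJY, hSY⟩
  rw [← transpose_map, xtx_transpose]

noncomputable def ofPoly : MvPolynomial (Fin (2 * m)) A →ₐ[A] P A m ⧸ I A m :=
  aeval fun i => Ideal.Quotient.mk (I A m) (x A m i)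

theorem map_targetY_ofPoly :
    (targetY A m).map (ofPoly A m) = (Yt A m).map (Ideal.Quotient.mk (I A m)) := by
  have hS : (vecMulVec X X).map (ofPoly A m) = (xtx A m).map (Ideal.Quotient.mk (I A m)) := by
    ext i j : 1
    simp [ofPoly, xtx, x, vecMulVec_apply]
  rw [map_Yt_mk, ← hS, targetY_eq_neg_mul, Matrix.map_neg _ (map_neg _), Matrix.map_mul,
    map_Jmat]

noncomputable def ofQuotient : (P A m ⧸ I A m) →ₐ[A] MvPolynomial (Fin (2 * m)) A :=
  Ideal.Quotient.liftₐ (I A m) (toPoly A m) fun _ h => RingHom.mem_ker.mp (I_le_ker_toPoly A m h)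

theorem ofQuotient_mk (p : P A m) :
    ofQuotient A m (Ideal.Quotient.mk (I A m) p) = toPoly A m p :=
  rfl

noncomputable def quotientEquiv : (P A m ⧸ I A m) ≃ₐ[A] MvPolynomial (Fin (2 * m)) A :=
  AlgEquiv.ofAlgHom (ofQuotient A m) (ofPoly A m)
    (MvPolynomial.algHom_ext fun i => by simp [ofPoly, ofQuotient_mk, toPoly, x])
    (Ideal.Quotient.algHom_ext _ <| MvPolynomial.algHom_ext <| by
      rintro (⟨i, j⟩ | i)
      · simpa [ofQuotient_mk, toPoly, Yt] using congr_fun₂ (map_targetY_ofPoly A m) i j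
      · simp [ofQuotient_mk, toPoly, ofPoly, x])

end Stmt8

theorem stmt_8_general (A : Type*) [CommRing A] (m : ℕ) :
    (∃ e : (Stmt8.P A m ⧸ Stmt8.I A m) ≃ₐ[A] MvPolynomial (Fin (2 * m)) A,
      (∀ i : Fin (2 * m),
        e (Ideal.Quotient.mk (Stmt8.I A m) (X (Sum.inr i))) = X i) ∧
      (∀ i j : Fin (2 * m),
        e (Ideal.Quotient.mk (Stmt8.I A m) (X (Sum.inl (i, j)))) = Stmt8.targetY A m i j)) ∧
    Algebra.Smooth A (Stmt8.P A m ⧸ Stmt8.I A m) := by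
  refine ⟨⟨Stmt8.quotientEquiv A m, fun i => ?_, fun i j => ?_⟩,
    .of_equiv (Stmt8.quotientEquiv A m).symm⟩ <;>
  simp [Stmt8.quotientEquiv, Stmt8.ofQuotient_mk, Stmt8.toPoly]

/-- **the chart `U^fl_{m}` in the (R-P) case.**  Let `A` be a commutative ring
and `m ≥ 1`.  With `J = [[0, H_m], [−H_m, 0]]` (so `J² = −1`), `P = A[ỹ_{ij}, x_i]` and `I` the
ideal generated by the `2 × 2` minors of the `(2m+1) × 2m` matrix stacking `Ỹ` over the row `x`,
the entries of `J·Ỹ + Ỹᵀ·J`, and the entries of `xᵗ·x + Ỹᵀ·J`, the `A`-algebra `P/I` is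
isomorphic to the polynomial ring `A[x₁, …, x_{2m}]` via `x_i ↦ x_i`, `Ỹ ↦ −J·xᵗ·x`.
In particular `P/I` is a smooth `A`-algebra. -/
theorem stmt_8 (A : Type*) [CommRing A] (m : ℕ) (hm : 1 ≤ m) :
    (∃ e : (Stmt8.P A m ⧸ Stmt8.I A m) ≃ₐ[A] MvPolynomial (Fin (2 * m)) A,
      (∀ i : Fin (2 * m),
        e (Ideal.Quotient.mk (Stmt8.I A m) (X (Sum.inr i))) = X i) ∧
      (∀ i j : Fin (2 * m),
        e (Ideal.Quotient.mk (Stmt8.I A m) (X (Sum.inl (i, j)))) = Stmt8.targetY A m i j)) ∧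
    Algebra.Smooth A (Stmt8.P A m ⧸ Stmt8.I A m) :=
  stmt_8_general A m
end

section
/- Let R be a commutative ring and let t, π₀ ∈ R be nilpotent elements. Let A := R[T]/(T² − t·T + π₀), let π be the class of T, let σ : A → A be the R-algebra involution determined by σ(π) = t − π, and let N : A → R be the norm N(a) = a·σ(a). Let M be an A-module and q : M → R an R-valued hermitian quadratic form on M, i.e., a quadratic form over R such that q(a·x) = N(a)·q(x) and, for the polar form f(x,y) := q(x+y) − q(x) − q(y), one has f(a·x, y) = f(x, σ(a)·y), for all a ∈ A and x, y ∈ M. Suppose there exist v, w ∈ M with f(v, π·w) = 1 in R. Then there exist v′, w′ in the A-submodule of M generated by {v, w} such that q(v′) = q(w′) = f(v′, w′) = 0 and f(v′, π·w′) = 1. -/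
open Polynomial

/-- The quadratic `R`-algebra `A = R[T]/(T² − t·T + π₀)`. -/
noncomputable abbrev QuadAlg (R : Type*) [CommRing R] (t π₀ : R) : Type _ :=
  AdjoinRoot (X ^ 2 - C t * X + C π₀ : Polynomial R)

/-- The class `π` of `T` in `R[T]/(T² − t·T + π₀)`. -/
noncomputable abbrev QuadAlg.pi (R : Type*) [CommRing R] (t π₀ : R) : QuadAlg R t π₀ :=
  AdjoinRoot.root _

/-- `q : M → R` is an `R`-valued hermitian quadratic form on the `A`-module `M`
(`A` a quadratic `R`-algebra with involution `σ` and norm `Nm`): it is a quadratic form over `R`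
(so `q (r • x) = r² q x` and its polar form `f (x, y) = q (x+y) − q x − q y` is `R`-bilinear),
`q (a • x) = Nm a · q x`, and `f (a • x, y) = f (x, σ a • y)`. -/
structure IsHermitianQuadForm (R : Type*) [CommRing R]
    (A : Type*) [CommRing A] [Algebra R A] (σ : A →ₐ[R] A) (Nm : A → R)
    (M : Type*) [AddCommGroup M] [Module R M] [Module A M] [IsScalarTower R A M]
    (q : M → R) : Prop where
  smul_sq : ∀ (r : R) (x : M), q (r • x) = r ^ 2 * q x
  polar_add_left : ∀ x x' y : M,
    q (x + x' + y) - q (x + x') - q y =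
      (q (x + y) - q x - q y) + (q (x' + y) - q x' - q y)
  polar_smul_left : ∀ (r : R) (x y : M),
    q (r • x + y) - q (r • x) - q y = r * (q (x + y) - q x - q y)
  norm_smul : ∀ (a : A) (x : M), q (a • x) = Nm a * q x
  herm : ∀ (a : A) (x y : M),
    q (a • x + y) - q (a • x) - q y = q (x + σ a • y) - q x - q (σ a • y)

/-!
Work modulo the nilradical, where `t = π₀ = 0`. First make `v` isotropic by adding `y • π • w`:
this needs a root of `π₀ q(w) y² + y + q(v)`, which Newton's method provides because the
quadratic coefficient is nilpotent. Then make `w` isotropic by adding `z • π • v`; now the equation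
is linear in `z`, with coefficient `f(w, π v) ≡ -1` a unit. Finally replace `w` by `(c + d π) • w`,
which stays isotropic since `q(a x) = N(a) q(x)`: the two remaining conditions form a linear
system in `c, d` whose determinant is `≡ -f(v, π w)²`, again a unit.
-/

open QuadraticMap

theorem exists_mul_sq_add_add_eq_zero {R : Type*} [CommRing R] {m : R} (hm : IsNilpotent m)
    (c : R) : ∃ y : R, m * y ^ 2 + y + c = 0 := by
  let P : R[X] := C m * X ^ 2 + X + C c
  have hP : IsNilpotent (aeval (-c) P) := by
    simpa [P] using (Commute.all m (c ^ 2)).isNilpotent_mul_right hm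
  have hP' : IsUnit (aeval (-c) (derivative P)) := by
    convert ((Commute.all m (-(2 * c))).isNilpotent_mul_right hm).isUnit_add_one using 1
    simp [P]
    ring
  obtain ⟨y, -, hy⟩ := (existsUnique_nilpotent_sub_and_aeval_eq_zero hP hP').exists
  exact ⟨y, by simpa [P] using hy⟩

theorem isUnit_of_sub_mem_nilradical {R : Type*} [CommRing R] {u x : R} (hu : IsUnit u)
    (h : x - u ∈ nilradical R) : IsUnit x := by
  simpa using (mem_nilradical.1 h).isUnit_add_left_of_commute hu (Commute.all _ _)

namespace QuadAlg

variable {R : Type*} [CommRing R] {t π₀ : R}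

theorem pi_sq : pi R t π₀ ^ 2 = algebraMap R _ t * pi R t π₀ - algebraMap R _ π₀ := by
  have h := AdjoinRoot.mk_self (f := (X ^ 2 - C t * X + C π₀ : R[X]))
  simp only [map_add, map_sub, map_mul, map_pow, AdjoinRoot.mk_X, AdjoinRoot.mk_C] at h
  rw [AdjoinRoot.algebraMap_eq]
  linear_combination h

theorem algebraMap_injective : Function.Injective (algebraMap R (QuadAlg R t π₀)) := by
  refine (injective_iff_map_eq_zero _).2 fun r hr => ?_
  by_contra hr0
  have : Nontrivial R := ⟨⟨r, 0, hr0⟩⟩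
  have hdeg : (X ^ 2 - C t * X + C π₀ : R[X]).natDegree = 2 := by compute_degree!
  exact AdjoinRoot.mk_ne_zero_of_natDegree_lt (by monicity!) (C_ne_zero.2 hr0) (by simp [hdeg]) hr

end QuadAlg

theorem smul_smul_eq_of_sq_eq {R A M : Type*} [CommRing R] [CommRing A] [Algebra R A]
    [AddCommGroup M] [Module R M] [Module A M] [IsScalarTower R A M] {t π₀ : R} {p : A}
    (hp : p ^ 2 = algebraMap R A t * p - algebraMap R A π₀) (x : M) :
    p • p • x = t • p • x - π₀ • x := by
  rw [smul_smul, ← _root_.sq, hp, sub_smul, mul_smul, algebraMap_smul, algebraMap_smul]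

namespace IsHermitianQuadForm

variable {R A M : Type*} [CommRing R] [CommRing A] [Algebra R A] {σ : A →ₐ[R] A} {Nm : A → R}
  [AddCommGroup M] [Module R M] [Module A M] [IsScalarTower R A M] {q : M → R}

def toQuadraticMap (hq : IsHermitianQuadForm R A σ Nm M q) : QuadraticMap R M R :=
  ofPolar q (fun r x => by rw [hq.smul_sq, _root_.sq, smul_eq_mul]) hq.polar_add_left
    hq.polar_smul_left

theorem polar_add_right (hq : IsHermitianQuadForm R A σ Nm M q) (x y y' : M) :
    polar q x (y + y') = polar q x y + polar q x y' :=
  hq.toQuadraticMap.polar_add_right x y y'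

theorem polar_smul_right (hq : IsHermitianQuadForm R A σ Nm M q) (r : R) (x y : M) :
    polar q x (r • y) = r * polar q x y :=
  hq.toQuadraticMap.polar_smul_right r x y

theorem polar_sub_right (hq : IsHermitianQuadForm R A σ Nm M q) (x y y' : M) :
    polar q x (y - y') = polar q x y - polar q x y' :=
  hq.toQuadraticMap.polar_sub_right x y y'

variable {t π₀ : R} {p : A}

theorem polar_smul_left_of_map_eq_sub (hq : IsHermitianQuadForm R A σ Nm M q)
    (hσp : σ p = algebraMap R A t - p) (x y : M) :
    polar q (p • x) y = t * polar q x y - polar q x (p • y) := by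
  rw [polar, hq.herm, hσp, sub_smul, algebraMap_smul, ← polar, hq.polar_sub_right,
    hq.polar_smul_right]

theorem polar_smul_smul_of_sq_eq (hq : IsHermitianQuadForm R A σ Nm M q)
    (hp : p ^ 2 = algebraMap R A t * p - algebraMap R A π₀) (hσp : σ p = algebraMap R A t - p)
    (x y : M) : polar q (p • x) (p • y) = π₀ * polar q x y := by
  rw [hq.polar_smul_left_of_map_eq_sub hσp, smul_smul_eq_of_sq_eq hp, hq.polar_sub_right,
    hq.polar_smul_right, hq.polar_smul_right]
  ring

theorem map_add_smul_smul (hq : IsHermitianQuadForm R A σ Nm M q) (hNp : Nm p = π₀)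
    (x y : M) (s : R) : q (x + s • p • y) = q x + s ^ 2 * (π₀ * q y) + s * polar q x (p • y) := by
  rw [QuadraticMap.map_add q, hq.smul_sq, hq.norm_smul, hNp, hq.polar_smul_right]

theorem exists_map_add_smul_smul_eq_zero (hq : IsHermitianQuadForm R A σ Nm M q)
    (hNp : Nm p = π₀) (hπ₀ : IsNilpotent π₀) {x y : M} (hxy : IsUnit (polar q x (p • y))) :
    ∃ s : R, q (x + s • p • y) = 0 := by
  obtain ⟨u, hu⟩ := hxy
  obtain ⟨s, hs⟩ := exists_mul_sq_add_add_eq_zero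
    ((Commute.all π₀ (q y * ↑u⁻¹ ^ 2)).isNilpotent_mul_right hπ₀) (q x)
  refine ⟨s * ↑u⁻¹, ?_⟩
  rw [hq.map_add_smul_smul hNp, ← hu]
  linear_combination hs + s * u.inv_mul

theorem exists_smul_polar_eq_zero_and_polar_smul_eq_one (hq : IsHermitianQuadForm R A σ Nm M q)
    (hp : p ^ 2 = algebraMap R A t * p - algebraMap R A π₀) (ht : IsNilpotent t)
    (hπ₀ : IsNilpotent π₀) {x y : M} (hxy : IsUnit (polar q x (p • y))) :
    ∃ a : A, polar q x (a • y) = 0 ∧ polar q x (p • a • y) = 1 := by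
  set P := polar q x y
  set Q := polar q x (p • y)
  obtain ⟨D, hD⟩ : IsUnit (t * P * Q - π₀ * P ^ 2 - Q ^ 2) := by
    refine isUnit_of_sub_mem_nilradical (hxy.pow 2).neg ?_
    rw [show t * P * Q - π₀ * P ^ 2 - Q ^ 2 - -Q ^ 2 = t * (P * Q) - π₀ * P ^ 2 by ring]
    exact sub_mem (Ideal.mul_mem_right _ _ (mem_nilradical.2 ht))
      (Ideal.mul_mem_right _ _ (mem_nilradical.2 hπ₀))
  set c := -Q * ↑D⁻¹
  set d := P * ↑D⁻¹
  have ha : (algebraMap R A c + algebraMap R A d * p) • y = c • y + d • p • y := by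
    rw [add_smul, mul_smul, algebraMap_smul, algebraMap_smul]
  refine ⟨algebraMap R A c + algebraMap R A d * p, ?_, ?_⟩
  · rw [ha, hq.polar_add_right, hq.polar_smul_right, hq.polar_smul_right]
    ring
  · rw [ha, smul_add, smul_comm p c, smul_comm p d, smul_smul_eq_of_sq_eq hp,
      hq.polar_add_right, hq.polar_smul_right, hq.polar_smul_right, hq.polar_sub_right,
      hq.polar_smul_right, hq.polar_smul_right]
    linear_combination D.mul_inv - ↑D⁻¹ * hD

theorem exists_hyperbolic_pair (hq : IsHermitianQuadForm R A σ Nm M q)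
    (hp : p ^ 2 = algebraMap R A t * p - algebraMap R A π₀) (hσp : σ p = algebraMap R A t - p)
    (hNp : Nm p = π₀) (ht : IsNilpotent t) (hπ₀ : IsNilpotent π₀) {v w : M}
    (hvw : polar q v (p • w) = 1) :
    ∃ v' w' : M, v' ∈ Submodule.span A {v, w} ∧ w' ∈ Submodule.span A {v, w} ∧
      q v' = 0 ∧ q w' = 0 ∧ polar q v' w' = 0 ∧ polar q v' (p • w') = 1 := by
  have ht' := mem_nilradical.2 ht
  have hπ₀' := mem_nilradical.2 hπ₀
  have hv : v ∈ Submodule.span A {v, w} := Submodule.subset_span (by simp)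
  have hw : w ∈ Submodule.span A {v, w} := Submodule.subset_span (by simp)
  obtain ⟨y, hv₁⟩ := hq.exists_map_add_smul_smul_eq_zero hNp hπ₀ (hvw ▸ isUnit_one)
  set v₁ := v + y • p • w
  have hv₁w : polar q v₁ (p • w) - 1 ∈ nilradical R := by
    rw [polar_comm, hq.polar_add_right, hq.polar_smul_right, polar_comm, hvw,
      hq.polar_smul_smul_of_sq_eq hp hσp, add_sub_cancel_left]
    exact Ideal.mul_mem_left _ _ (Ideal.mul_mem_right _ _ hπ₀')
  have hwv₁ : IsUnit (polar q w (p • v₁)) := by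
    refine isUnit_of_sub_mem_nilradical isUnit_one.neg ?_
    rw [polar_comm, hq.polar_smul_left_of_map_eq_sub hσp,
      show ∀ a b : R, t * a - b - -1 = t * a - (b - 1) by intros; ring]
    exact sub_mem (Ideal.mul_mem_right _ _ ht') hv₁w
  obtain ⟨z, hw₁⟩ := hq.exists_map_add_smul_smul_eq_zero hNp hπ₀ hwv₁
  set w₁ := w + z • p • v₁
  have hv₁w₁ : IsUnit (polar q v₁ (p • w₁)) := by
    refine isUnit_of_sub_mem_nilradical isUnit_one ?_
    rw [smul_add, smul_comm p z, smul_smul_eq_of_sq_eq hp, hq.polar_add_right,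
      hq.polar_smul_right, hq.polar_sub_right, hq.polar_smul_right, hq.polar_smul_right,
      show ∀ a b c : R, a + z * (t * b - π₀ * c) - 1 = (a - 1) + t * (z * b) - π₀ * (z * c) by
        intros; ring]
    exact sub_mem (add_mem hv₁w (Ideal.mul_mem_right _ _ ht')) (Ideal.mul_mem_right _ _ hπ₀')
  obtain ⟨a, ha₀, ha₁⟩ := hq.exists_smul_polar_eq_zero_and_polar_smul_eq_one hp ht hπ₀ hv₁w₁
  have hv₁_mem : v₁ ∈ Submodule.span A {v, w} :=
    add_mem hv (Submodule.smul_of_tower_mem _ y (Submodule.smul_mem _ p hw))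
  have hw₁_mem : w₁ ∈ Submodule.span A {v, w} :=
    add_mem hw (Submodule.smul_of_tower_mem _ z (Submodule.smul_mem _ p hv₁_mem))
  exact ⟨v₁, a • w₁, hv₁_mem, Submodule.smul_mem _ a hw₁_mem, hv₁,
    by rw [hq.norm_smul, hw₁, mul_zero], ha₀, ha₁⟩

end IsHermitianQuadForm

/-- **hyperbolic normal form lemma.**  Let `R` be a commutative ring and
`t, π₀ ∈ R` nilpotent.  Let `A := R[T]/(T² − t·T + π₀)` with `π` the class of `T`, `σ` the
`R`-algebra involution determined by `σ π = t − π`, and `N a = a·σ a` the norm (the unique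
`Nm : A → R` with `algebraMap R A (Nm a) = a * σ a`).  Let `M` be an `A`-module and `q : M → R`
an `R`-valued hermitian quadratic form on `M`.  If there are `v, w ∈ M` with
`f (v, π • w) = 1` (where `f` is the polar form of `q`), then there exist `v', w'` in the
`A`-submodule generated by `{v, w}` with `q v' = q w' = f (v', w') = 0` and
`f (v', π • w') = 1`. -/
theorem stmt_16 (R : Type*) [CommRing R] (t π₀ : R)
    (ht : IsNilpotent t) (hπ₀ : IsNilpotent π₀)
    (σ : QuadAlg R t π₀ →ₐ[R] QuadAlg R t π₀)
    (hσ : σ (QuadAlg.pi R t π₀) = algebraMap R (QuadAlg R t π₀) t - QuadAlg.pi R t π₀)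
    (Nm : QuadAlg R t π₀ → R)
    (hNm : ∀ a : QuadAlg R t π₀, algebraMap R (QuadAlg R t π₀) (Nm a) = a * σ a)
    (M : Type*) [AddCommGroup M] [Module R M] [Module (QuadAlg R t π₀) M]
    [IsScalarTower R (QuadAlg R t π₀) M]
    (q : M → R)
    (hq : IsHermitianQuadForm R (QuadAlg R t π₀) σ Nm M q)
    (v w : M)
    (hvw : q (v + QuadAlg.pi R t π₀ • w) - q v - q (QuadAlg.pi R t π₀ • w) = 1) :
    ∃ v' w' : M,
      v' ∈ Submodule.span (QuadAlg R t π₀) ({v, w} : Set M) ∧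
      w' ∈ Submodule.span (QuadAlg R t π₀) ({v, w} : Set M) ∧
      q v' = 0 ∧ q w' = 0 ∧
      q (v' + w') - q v' - q w' = 0 ∧
      q (v' + QuadAlg.pi R t π₀ • w') - q v' - q (QuadAlg.pi R t π₀ • w') = 1 := by
  have hp := QuadAlg.pi_sq (R := R) (t := t) (π₀ := π₀)
  have hNp : Nm (QuadAlg.pi R t π₀) = π₀ :=
    QuadAlg.algebraMap_injective (by rw [hNm, hσ]; linear_combination -hp)
  exact hq.exists_hyperbolic_pair hp hσ hNp ht hπ₀ hvw
end

section
/- Let R be a commutative ring, t, π₀ ∈ R, A := R[T]/(T² − t·T + π₀), π the class of T, and π̄ := t − π. Let M be a finite free A-module and let b : M × M → R be an R-bilinear form satisfying b(π·m₁, m₂) = b(m₁, π̄·m₂) for all m₁, m₂ ∈ M. Let N ⊆ M be a free A-submodule on which b restricts to a perfect pairing, i.e., the R-linear map N → Hom_R(N, R) sending n to b(n, −)|_N is bijective. Let N^⊥ := {m ∈ M : b(m, n) = 0 for all n ∈ N}. Then N^⊥ is an A-submodule of M, N^⊥ is a projective A-module, and M = N ⊕ N^⊥ as A-modules (every m ∈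 M is uniquely a sum of an element of N and an element of N^⊥). -/
open Polynomial

/-!
Since `b` is perfect on `N`, for every `x : M` the functional `b x` restricted to `N` equals
`b n` restricted to `N` for a unique `n ∈ N`, and then `x - n ∈ N^⊥`; so `M = N ⊕ N^⊥` as
`R`-modules. The adjunction `b (π • m₁) m₂ = b m₁ (π̄ • m₂)` and `π̄ • N ⊆ N` make `N^⊥` stable
under `π`, hence under `A = R[π]`, so the splitting is one of `A`-modules, and `N^⊥`, a direct
summand of the free module `M`, is projective.
-/

theorem Module.Projective.of_isCompl {R M : Type*} [Ring R] [AddCommGroup M] [Module R M]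
    [Module.Projective R M] {p q : Submodule R M} (h : IsCompl p q) : Module.Projective R p :=
  .of_split p.subtype (p.projectionOnto q h) <|
    LinearMap.ext (Submodule.projectionOnto_apply_left h)

namespace Submodule

section Adjoint

variable {R A M : Type*} [CommSemiring R] [Semiring A] [Algebra R A] [AddCommMonoid M]
  [Module R M] [Module A M] [IsScalarTower R A M]

theorem smul_mem_orthogonalBilin_flip {b : M →ₗ[R] M →ₗ[R] R} {N : Submodule A M} {x y : A}
    (hx : Algebra.adjoin R {x} = ⊤) (hb : ∀ m₁ m₂, b (x • m₁) m₂ = b m₁ (y • m₂)) (a : A)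
    {m : M} (hm : m ∈ (N.restrictScalars R).orthogonalBilin b.flip) :
    a • m ∈ (N.restrictScalars R).orthogonalBilin b.flip := by
  have ha : a ∈ Algebra.adjoin R {x} := hx ▸ Algebra.mem_top
  induction ha using Algebra.adjoin_induction generalizing m with
  | mem z hz =>
    rw [Set.mem_singleton_iff.mp hz]
    intro n hn
    simpa [hb] using hm _ (N.smul_mem y hn)
  | algebraMap r => simpa [algebraMap_smul] using smul_mem _ r hm
  | add z w _ _ hz hw => simpa [add_smul] using add_mem (hz hm) (hw hm)
  | mul z w _ _ hz hw => simpa [mul_smul] using hz (hw hm)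

end Adjoint

variable {R M : Type*} [CommRing R] [AddCommGroup M] [Module R M]

theorem isCompl_orthogonalBilin_flip {b : M →ₗ[R] M →ₗ[R] R} {N : Submodule R M}
    (hb : Function.Bijective fun n : N => (b n).domRestrict N) :
    IsCompl N (N.orthogonalBilin b.flip) := by
  constructor
  · rw [disjoint_iff_inf_le]
    rintro x ⟨hxN, hx⟩
    have : (⟨x, hxN⟩ : N) = 0 := hb.injective <| LinearMap.ext fun n => by simpa using hx n n.2
    simpa using congrArg Subtype.val this
  · rw [codisjoint_iff_le_sup]
    intro x _
    obtain ⟨n, hn⟩ := hb.surjective ((b x).domRestrict N)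
    have hxn : x - n ∈ N.orthogonalBilin b.flip := fun m hm => by
      simpa [sub_eq_zero] using (LinearMap.congr_fun hn ⟨m, hm⟩).symm
    simpa using add_mem_sup n.2 hxn

end Submodule

theorem stmt_17_general (R : Type*) [CommRing R] (t π₀ : R)
    (M : Type*) [AddCommGroup M] [Module R M] [Module (QuadAlg R t π₀) M]
    [IsScalarTower R (QuadAlg R t π₀) M]
    [Module.Free (QuadAlg R t π₀) M]
    (b : M →ₗ[R] M →ₗ[R] R)
    (hb : ∀ m₁ m₂ : M,
      b (QuadAlg.pi R t π₀ • m₁) m₂ =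
        b m₁ ((algebraMap R (QuadAlg R t π₀) t - QuadAlg.pi R t π₀) • m₂))
    (N : Submodule (QuadAlg R t π₀) M)
    (hperf : Function.Bijective
      (fun n : N => (b (n : M)).domRestrict (N.restrictScalars R))) :
    ∃ Np : Submodule (QuadAlg R t π₀) M,
      (Np : Set M) = {x : M | ∀ n ∈ N, b x n = 0} ∧
      Module.Projective (QuadAlg R t π₀) Np ∧
      ∀ x : M, ∃! p : N × Np, ((p.1 : M) + (p.2 : M) = x) := by
  let Np : Submodule (QuadAlg R t π₀) M :=
    { (N.restrictScalars R).orthogonalBilin b.flip with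
      smul_mem' := fun a _ hm =>
        Submodule.smul_mem_orthogonalBilin_flip AdjoinRoot.adjoinRoot_eq_top hb a hm }
  have hcompl : IsCompl N Np :=
    (Submodule.isCompl_restrictScalars_iff R).mp (Submodule.isCompl_orthogonalBilin_flip hperf)
  exact ⟨Np, rfl, .of_isCompl hcompl.symm, Submodule.existsUnique_add_of_isCompl_prod hcompl⟩

/-- **orthogonal splitting.**  Let `R` be a commutative ring, `t, π₀ ∈ R`,
`A := R[T]/(T² − t·T + π₀)`, `π` the class of `T`, `π̄ := t − π`.  Let `M` be a finite free
`A`-module and `b : M × M → R` an `R`-bilinear form with `b (π • m₁, m₂) = b (m₁, π̄ • m₂)`.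
Let `N ⊆ M` be a free `A`-submodule on which `b` restricts to a perfect pairing (the induced
map `N → Hom_R(N, R)` is bijective).  Then the left orthogonal complement
`N^⊥ = {m | ∀ n ∈ N, b m n = 0}` is an `A`-submodule of `M`, it is projective as an
`A`-module, and `M = N ⊕ N^⊥` (every `m ∈ M` is uniquely a sum of an element of `N` and an
element of `N^⊥`). -/
theorem stmt_17 (R : Type*) [CommRing R] (t π₀ : R)
    (M : Type*) [AddCommGroup M] [Module R M] [Module (QuadAlg R t π₀) M]
    [IsScalarTower R (QuadAlg R t π₀) M]
    [Module.Free (QuadAlg R t π₀) M] [Module.Finite (QuadAlg R t π₀) M]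
    (b : M →ₗ[R] M →ₗ[R] R)
    (hb : ∀ m₁ m₂ : M,
      b (QuadAlg.pi R t π₀ • m₁) m₂ =
        b m₁ ((algebraMap R (QuadAlg R t π₀) t - QuadAlg.pi R t π₀) • m₂))
    (N : Submodule (QuadAlg R t π₀) M) [Module.Free (QuadAlg R t π₀) N]
    (hperf : Function.Bijective
      (fun n : N => (b (n : M)).domRestrict (N.restrictScalars R))) :
    ∃ Np : Submodule (QuadAlg R t π₀) M,
      (Np : Set M) = {x : M | ∀ n ∈ N, b x n = 0} ∧
      Module.Projective (QuadAlg R t π₀) Np ∧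
      ∀ x : M, ∃! p : N × Np, ((p.1 : M) + (p.2 : M) = x) :=
  stmt_17_general R t π₀ M b hb N hperf
end

section
/- Let O₀ be a discrete valuation ring of characteristic 0 with uniformizer π₀ such that π₀ divides 2 in O₀, and let t ∈ O₀ satisfy either (π₀ ∣ t and t ∣ 2) or t = 0. Let R be a commutative O₀-algebra, let d ≥ 1 be an odd integer, and let W, B be d×d matrices over R such that: W = Wᵗ; B + Bᵗ = t·W; and there exist a₁, …, a_d ∈ R with W_{ii} = 2·a_i and B_{ii} = t·a_i for all 1 ≤ i ≤ d. Then the determinant of the 2d×2d block matrix [[W, B], [Bᵗ, π₀·W]] lies in the ideal of R generated by 4·π₀ − t². -/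
/-!
Conjugating the block matrix `M = [[W, B], [Bᵀ, pW]]` by `L = [[1, 0], [-t, 2]]` and using
`B + Bᵀ = tW` gives `L M Lᵀ = [[W, B - Bᵀ], [Bᵀ - B, (4p - t²)W]]`. Modulo `c = 4p - t²` the
lower right block vanishes, so the determinant becomes `± det(B - Bᵀ) det(Bᵀ - B)`, and the
skew matrix `B - Bᵀ` of odd size has determinant zero. Hence `c ∣ 4ᵈ det M`.

To remove the factor `4ᵈ` and the need for `det(B - Bᵀ) = 0` over an arbitrary `R`, one works
with the generic matrices over `ℤ[p, t, aᵢ, wᵢⱼ, bᵢⱼ]`, which specialize to any `(W, B)` with the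
given diagonals. There `2` is not a zero divisor and `c ≡ t² (mod 2)` is not a zero divisor
mod `2`, so `c ∣ 2f` implies `c ∣ f`.
-/

open Matrix MvPolynomial

theorem Matrix.det_eq_zero_of_transpose_eq_neg {S n : Type*} [CommRing S] [IsDomain S]
    [CharZero S] [Fintype n] [DecidableEq n] (hn : Odd (Fintype.card n)) {A : Matrix n n S}
    (hA : Aᵀ = -A) : A.det = 0 := by
  have h := det_transpose A
  rw [hA, det_neg, hn.neg_one_pow, neg_one_mul] at h
  exact self_eq_neg.mp h.symm

theorem Matrix.det_fromBlocks_zero₂₂_eq_zero {S n : Type*} [CommRing S] [Fintype n]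
    [DecidableEq n] (A B C : Matrix n n S) (hB : B.det = 0) : (fromBlocks A B C 0).det = 0 := by
  have h := det_permute' (Equiv.sumComm n n) (fromBlocks A B C 0)
  rw [Equiv.sumComm_apply, fromBlocks_submatrix_sum_swap_right, submatrix_id_id,
    det_fromBlocks_zero₂₁, hB, zero_mul] at h
  exact ((Equiv.Perm.sign _).isUnit.map (Int.castRingHom S)).mul_right_eq_zero.mp h.symm

theorem Matrix.dvd_det_fromBlocks_smul {S n : Type*} [CommRing S] [Fintype n] [DecidableEq n]
    (c : S) (A B C D : Matrix n n S) (hB : B.det = 0) : c ∣ (fromBlocks A B C (c • D)).det := by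
  rw [← Ideal.mem_span_singleton, ← Ideal.Quotient.eq_zero_iff_mem, RingHom.map_det,
    RingHom.mapMatrix_apply, fromBlocks_map]
  have hcD : (c • D).map (Ideal.Quotient.mk (Ideal.span {c})) = 0 := by
    ext i j
    simp
  rw [hcD]
  refine det_fromBlocks_zero₂₂_eq_zero _ _ _ ?_
  rw [← RingHom.mapMatrix_apply, ← RingHom.map_det, hB, map_zero]

theorem Matrix.two_pow_mul_det_fromBlocks {S n : Type*} [CommRing S] [Fintype n]
    [DecidableEq n] (p t : S) (W B : Matrix n n S) (hB : B + Bᵀ = t • W) :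
    2 ^ (2 * Fintype.card n) * (fromBlocks W B Bᵀ (p • W)).det =
      (fromBlocks W (B - Bᵀ) (Bᵀ - B) ((4 * p - t ^ 2) • W)).det := by
  set L : Matrix (n ⊕ n) (n ⊕ n) S := fromBlocks 1 0 ((-t) • 1) ((2 : S) • 1)
  have hL : L.det = 2 ^ Fintype.card n := by simp [L, det_fromBlocks_zero₁₂]
  have hconj : L * fromBlocks W B Bᵀ (p • W) * Lᵀ =
      fromBlocks W (B - Bᵀ) (Bᵀ - B) ((4 * p - t ^ 2) • W) := by
    simp only [L, fromBlocks_transpose, fromBlocks_multiply, eq_sub_of_add_eq' hB]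
    simp only [one_mul, zero_mul, add_zero, transpose_one, mul_one, Algebra.mul_smul_comm,
      smul_zero, transpose_zero, mul_zero, neg_smul, transpose_neg, transpose_smul, mul_neg,
      neg_mul, Algebra.smul_mul_assoc, smul_add, smul_neg, neg_add_rev, neg_neg, fromBlocks_inj,
      true_and]
    refine ⟨?_, ?_, ?_⟩ <;> module
  rw [← hconj, det_mul, det_mul, det_transpose, hL]
  ring

theorem MvPolynomial.dvd_of_dvd_two_mul {σ : Type*} {c f : MvPolynomial σ ℤ}
    (hc : map (Int.castRingHom (ZMod 2)) c ≠ 0) (h : c ∣ 2 * f) : c ∣ f := by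
  obtain ⟨g, hg⟩ := h
  have hg2 : map (Int.castRingHom (ZMod 2)) g = 0 := by
    have h2 := congrArg (map (Int.castRingHom (ZMod 2))) hg
    rw [map_mul, map_mul, map_ofNat, CharTwo.two_eq_zero (R := MvPolynomial σ (ZMod 2)),
      zero_mul, eq_comm] at h2
    exact (mul_eq_zero.mp h2).resolve_left hc
  obtain ⟨g', rfl⟩ := (C_dvd_iff_zmod 2 g).mpr hg2
  refine ⟨g', mul_left_cancel₀ two_ne_zero ?_⟩
  rw [hg, Nat.cast_ofNat, map_ofNat C 2]
  ring

theorem MvPolynomial.dvd_of_dvd_two_pow_mul {σ : Type*} {c f : MvPolynomial σ ℤ}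
    (hc : map (Int.castRingHom (ZMod 2)) c ≠ 0) (k : ℕ) (h : c ∣ 2 ^ k * f) : c ∣ f := by
  induction k with
  | zero => simpa using h
  | succ k ih => exact ih (dvd_of_dvd_two_mul hc (by rwa [pow_succ', mul_assoc] at h))

inductive GenericVar (d : ℕ) : Type
  | p
  | t
  | a (i : Fin d)
  | w (i j : Fin d)
  | b (i j : Fin d)

def GenericVar.eval {R : Type*} {d : ℕ} (p t : R) (a : Fin d → R)
    (W B : Matrix (Fin d) (Fin d) R) : GenericVar d → R
  | .p => p
  | .t => t
  | .a i => a i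
  | .w i j => W i j
  | .b i j => B i j

noncomputable def genericW (d : ℕ) : Matrix (Fin d) (Fin d) (MvPolynomial (GenericVar d) ℤ) :=
  of fun i j => if i = j then 2 * X (.a i) else if i < j then X (.w i j) else X (.w j i)

-- The entries below the diagonal are forced by `B + Bᵀ = tW`.
noncomputable def genericB (d : ℕ) : Matrix (Fin d) (Fin d) (MvPolynomial (GenericVar d) ℤ) :=
  of fun i j => if i = j then X GenericVar.t * X (.a i)
    else if i < j then X (.b i j) else X GenericVar.t * X (.w j i) - X (.b j i)

section Generic

variable {d : ℕ}

theorem genericB_add_transpose :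
    genericB d + (genericB d)ᵀ = (X .t : MvPolynomial (GenericVar d) ℤ) • genericW d := by
  ext i j : 1
  rcases lt_trichotomy i j with h | rfl | h
  · simp [genericB, genericW, h.ne, h.ne', h, lt_asymm h]
  · simp [genericB, genericW]
    ring
  · simp [genericB, genericW, h.ne, h.ne', h, lt_asymm h]

theorem four_mul_sub_sq_dvd_det_generic (hd : Odd d) :
    (4 * X .p - X .t ^ 2 : MvPolynomial (GenericVar d) ℤ) ∣
      (fromBlocks (genericW d) (genericB d) (genericB d)ᵀ
        ((X .p : MvPolynomial (GenericVar d) ℤ) • genericW d)).det := by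
  have hskew : (genericB d - (genericB d)ᵀ).det = 0 :=
    det_eq_zero_of_transpose_eq_neg (by simpa using hd)
      (by rw [transpose_sub, transpose_transpose, neg_sub])
  have hc : map (Int.castRingHom (ZMod 2))
      (4 * X .p - X .t ^ 2 : MvPolynomial (GenericVar d) ℤ) ≠ 0 := by
    have h4 : (4 : MvPolynomial (GenericVar d) (ZMod 2)) = 0 := by
      rw [show (4 : MvPolynomial (GenericVar d) (ZMod 2)) = 2 * 2 by norm_num,
        CharTwo.two_eq_zero (R := MvPolynomial (GenericVar d) (ZMod 2)), zero_mul]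
    simp [h4, X_ne_zero]
  refine dvd_of_dvd_two_pow_mul hc (2 * Fintype.card (Fin d)) ?_
  rw [two_pow_mul_det_fromBlocks _ _ _ _ genericB_add_transpose]
  exact dvd_det_fromBlocks_smul _ _ _ _ _ hskew

variable {R : Type*} [CommRing R] {p t : R} {a : Fin d → R} {W B : Matrix (Fin d) (Fin d) R}

theorem map_genericW (hW : W = Wᵀ) (hWa : ∀ i, W i i = 2 * a i) :
    (genericW d).map (aeval (GenericVar.eval p t a W B)) = W := by
  ext i j : 1
  rcases lt_trichotomy i j with h | rfl | h
  · simp [genericW, h.ne, h, GenericVar.eval]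
  · simp [genericW, GenericVar.eval, hWa]
  · simpa [genericW, h.ne', lt_asymm h, GenericVar.eval] using congrFun (congrFun hW j) i

theorem map_genericB (hB : B + Bᵀ = t • W) (hBa : ∀ i, B i i = t * a i) :
    (genericB d).map (aeval (GenericVar.eval p t a W B)) = B := by
  ext i j : 1
  rcases lt_trichotomy i j with h | rfl | h
  · simp [genericB, h.ne, h, GenericVar.eval]
  · simp [genericB, GenericVar.eval, hBa]
  · have hji := congrFun (congrFun hB j) i
    simp only [Matrix.add_apply, transpose_apply, Matrix.smul_apply, smul_eq_mul] at hji
    simp [genericB, h.ne', lt_asymm h, GenericVar.eval]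
    linear_combination -hji

theorem four_mul_sub_sq_dvd_det_fromBlocks (hd : Odd d) (hW : W = Wᵀ) (hB : B + Bᵀ = t • W)
    (hWa : ∀ i, W i i = 2 * a i) (hBa : ∀ i, B i i = t * a i) :
    4 * p - t ^ 2 ∣ (fromBlocks W B Bᵀ (p • W)).det := by
  have h := map_dvd (aeval (GenericVar.eval p t a W B)) (four_mul_sub_sq_dvd_det_generic hd)
  rw [AlgHom.map_det, AlgHom.mapMatrix_apply, fromBlocks_map, transpose_map,
    Matrix.map_smul' _ _ _ (map_mul _), map_genericW hW hWa, map_genericB hB hBa] at h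
  simpa [GenericVar.eval] using h

end Generic

theorem stmt_18_general (O₀ : Type*) [CommRing O₀]
    (π₀ : O₀) (t : O₀)
    (R : Type*) [CommRing R] [Algebra O₀ R]
    (d : ℕ) (hd : Odd d)
    (W B : Matrix (Fin d) (Fin d) R)
    (hW : W = Wᵀ)
    (hB : B + Bᵀ = algebraMap O₀ R t • W)
    (a : Fin d → R)
    (hWa : ∀ i : Fin d, W i i = 2 * a i)
    (hBa : ∀ i : Fin d, B i i = algebraMap O₀ R t * a i) :
    (Matrix.fromBlocks W B Bᵀ (algebraMap O₀ R π₀ • W)).det ∈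
      Ideal.span {algebraMap O₀ R (4 * π₀ - t ^ 2)} := by
  rw [Ideal.mem_span_singleton, map_sub, map_mul, map_pow, map_ofNat]
  exact four_mul_sub_sq_dvd_det_fromBlocks hd hW hB hWa hBa

/-- **divisibility of the discriminant.**  Let `O₀` be a discrete valuation ring
of characteristic `0` with uniformizer `π₀` dividing `2`, and let `t ∈ O₀` satisfy either
(`π₀ ∣ t` and `t ∣ 2`) or `t = 0`.  Let `R` be a commutative `O₀`-algebra, `d ≥ 1` an odd
integer, and `W, B` `d × d` matrices over `R` with `W = Wᵗ`, `B + Bᵗ = t·W`, and such that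
there are `a₁, …, a_d ∈ R` with `W i i = 2·aᵢ` and `B i i = t·aᵢ`.  Then the determinant of the
`2d × 2d` block matrix `[[W, B], [Bᵗ, π₀·W]]` lies in the ideal of `R` generated by
`4·π₀ − t²`. -/
theorem stmt_18 (O₀ : Type*) [CommRing O₀] [IsDomain O₀] [IsDiscreteValuationRing O₀]
    [CharZero O₀]
    (π₀ : O₀) (hπ₀ : Irreducible π₀) (hπ₀2 : π₀ ∣ 2)
    (t : O₀) (ht : (π₀ ∣ t ∧ t ∣ 2) ∨ t = 0)
    (R : Type*) [CommRing R] [Algebra O₀ R]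
    (d : ℕ) (hd1 : 1 ≤ d) (hd : Odd d)
    (W B : Matrix (Fin d) (Fin d) R)
    (hW : W = Wᵀ)
    (hB : B + Bᵀ = algebraMap O₀ R t • W)
    (a : Fin d → R)
    (hWa : ∀ i : Fin d, W i i = 2 * a i)
    (hBa : ∀ i : Fin d, B i i = algebraMap O₀ R t * a i) :
    (Matrix.fromBlocks W B Bᵀ (algebraMap O₀ R π₀ • W)).det ∈
      Ideal.span {algebraMap O₀ R (4 * π₀ - t ^ 2)} :=
  stmt_18_general O₀ π₀ t R d hd W B hW hB a hWa hBa
end
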